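/- arXiv:2011.13912 — 6 statements merged into one kernel-verified Lean document; each statement's English description precedes it below -/
import Mathlib

section
/- Restriction and uniqueness for the kernel Π_ℓS_L⁻¹. Let j ∈ 𝕊, ℓ ∈ ℕ and s ∈ ℂ_j. (i) For every z ∈ ℂ_j with z ∉ {s, s̄} (equivalently z ∉ [s]), Π_ℓS_L⁻¹(s,z) = (1/ℓ!)·(z̄ − s̄)^ℓ·(s − z)⁻¹. (ii) The function x ↦ Π_ℓS_L⁻¹(s,x) is the unique left poly slice monogenic function of order ℓ+1 on ℍ ∖ [s] with this restriction: if K : ℍ ∖ [s] → ℍ is left poly slice monogenic of order ℓ+1 and K(z) = (1/ℓ!)·(z̄ − s̄)^ℓ·(s − z)⁻¹ for all z ∈ ℂ_j ∖ {s, s̄}, then K(x) = Π_ℓS_L⁻¹(s,x) for all x ∈ ℍ ∖ [s]. -/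
noncomputable section

open scoped Quaternion
open Finset

/-- The sphere of imaginary units of the quaternions. -/
def Sph : Set ℍ[ℝ] := {j | j.re = 0 ∧ ‖j‖ = 1}

/-- The 2-sphere `[x]` associated to a quaternion `x`. -/
def assocSphere (x : ℍ[ℝ]) : Set ℍ[ℝ] :=
  {y | ∃ j ∈ Sph, y = (x.re : ℍ[ℝ]) + ‖x.im‖ • j}

/-- A set `U ⊆ ℍ` is axially symmetric if `[x] ⊆ U` for every `x ∈ U`. -/
def AxiallySymmetric (U : Set ℍ[ℝ]) : Prop := ∀ x ∈ U, assocSphere x ⊆ U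

/-- `𝒰 = {(u,v) ∈ ℝ² : u + v·j ∈ U for all j ∈ 𝕊}`. -/
def slicePlane (U : Set ℍ[ℝ]) : Set (ℝ × ℝ) :=
  {p | ∀ j ∈ Sph, ((p.1 : ℍ[ℝ]) + p.2 • j) ∈ U}

/-- The operator `∂̄_j : H ↦ (1/2)(∂_u H + j·∂_v H)`. -/
def dbarL (j : ℍ[ℝ]) (H : ℝ × ℝ → ℍ[ℝ]) : ℝ × ℝ → ℍ[ℝ] :=
  fun p => (2 : ℝ)⁻¹ • (fderiv ℝ H p (1, 0) + j * fderiv ℝ H p (0, 1))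

/-- The right version `H ↦ (1/2)(∂_u H + (∂_v H)·j)`. -/
def dbarR (j : ℍ[ℝ]) (H : ℝ × ℝ → ℍ[ℝ]) : ℝ × ℝ → ℍ[ℝ] :=
  fun p => (2 : ℝ)⁻¹ • (fderiv ℝ H p (1, 0) + fderiv ℝ H p (0, 1) * j)

/-- `F₀, F₁` are (left) slice components of `F` on `U`. -/
def SliceCompL (U : Set ℍ[ℝ]) (F : ℍ[ℝ] → ℍ[ℝ]) (F₀ F₁ : ℝ × ℝ → ℍ[ℝ]) : Prop :=
  ∀ p ∈ slicePlane U, ∀ j ∈ Sph, F ((p.1 : ℍ[ℝ]) + p.2 • j) = F₀ p + j * F₁ p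

/-- `F₀, F₁` are (right) slice components of `F` on `U`. -/
def SliceCompR (U : Set ℍ[ℝ]) (F : ℍ[ℝ] → ℍ[ℝ]) (F₀ F₁ : ℝ × ℝ → ℍ[ℝ]) : Prop :=
  ∀ p ∈ slicePlane U, ∀ j ∈ Sph, F ((p.1 : ℍ[ℝ]) + p.2 • j) = F₀ p + F₁ p * j

/-- The pair `(F₀,F₁)` is `C^M` and `F₀ + j·F₁` is annihilated by `∂̄_j^M` on `𝒰`,
for every `j ∈ 𝕊`. -/
def PolyCompL (U : Set ℍ[ℝ]) (M : ℕ) (F₀ F₁ : ℝ × ℝ → ℍ[ℝ]) : Prop :=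
  ContDiffOn ℝ (M : ℕ∞) F₀ (slicePlane U) ∧ ContDiffOn ℝ (M : ℕ∞) F₁ (slicePlane U) ∧
  ∀ j ∈ Sph, ∀ p ∈ slicePlane U, (dbarL j)^[M] (fun q => F₀ q + j * F₁ q) p = 0

/-- Right-sided version of `PolyCompL`. -/
def PolyCompR (U : Set ℍ[ℝ]) (M : ℕ) (F₀ F₁ : ℝ × ℝ → ℍ[ℝ]) : Prop :=
  ContDiffOn ℝ (M : ℕ∞) F₀ (slicePlane U) ∧ ContDiffOn ℝ (M : ℕ∞) F₁ (slicePlane U) ∧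
  ∀ j ∈ Sph, ∀ p ∈ slicePlane U, (dbarR j)^[M] (fun q => F₀ q + F₁ q * j) p = 0

/-- `F` is left poly slice monogenic of order `M` on `U`. -/
def PolySliceMonL (U : Set ℍ[ℝ]) (M : ℕ) (F : ℍ[ℝ] → ℍ[ℝ]) : Prop :=
  ∃ F₀ F₁ : ℝ × ℝ → ℍ[ℝ], SliceCompL U F F₀ F₁ ∧ PolyCompL U M F₀ F₁

/-- `F` is right poly slice monogenic of order `M` on `U`. -/
def PolySliceMonR (U : Set ℍ[ℝ]) (M : ℕ) (F : ℍ[ℝ] → ℍ[ℝ]) : Prop :=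
  ∃ F₀ F₁ : ℝ × ℝ → ℍ[ℝ], SliceCompR U F F₀ F₁ ∧ PolyCompR U M F₀ F₁

/-- `F` is intrinsic poly slice monogenic of order `M` on `U`
(the slice components can be taken real-valued). -/
def PolySliceMonN (U : Set ℍ[ℝ]) (M : ℕ) (F : ℍ[ℝ] → ℍ[ℝ]) : Prop :=
  ∃ F₀ F₁ : ℝ × ℝ → ℍ[ℝ], (∀ p, (F₀ p).im = 0) ∧ (∀ p, (F₁ p).im = 0) ∧
    SliceCompL U F F₀ F₁ ∧ PolyCompL U M F₀ F₁

/-- `Q_s(x) = x² − 2(Re s)·x + ‖s‖²`. -/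
def Qker (s x : ℍ[ℝ]) : ℍ[ℝ] := x ^ 2 - 2 * (s.re : ℍ[ℝ]) * x + ((‖s‖ ^ 2 : ℝ) : ℍ[ℝ])

/-- The left slice monogenic Cauchy kernel (form I). -/
def SL (s x : ℍ[ℝ]) : ℍ[ℝ] := -((Qker s x)⁻¹ * (x - star s))

/-- The right slice monogenic Cauchy kernel (form I). -/
def SR (s x : ℍ[ℝ]) : ℍ[ℝ] := -((x - star s) * (Qker s x)⁻¹)

/-- The kernel `P_ℓ S_L⁻¹(s,x) = ((Re(s−x))^ℓ/ℓ!)·S_L⁻¹(s,x)`. -/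
def PkL (ℓ : ℕ) (s x : ℍ[ℝ]) : ℍ[ℝ] :=
  (((s - x).re ^ ℓ / ℓ.factorial : ℝ) : ℍ[ℝ]) * SL s x

/-- The kernel `P_ℓ S_R⁻¹(s,x) = ((Re(s−x))^ℓ/ℓ!)·S_R⁻¹(s,x)`. -/
def PkR (ℓ : ℕ) (s x : ℍ[ℝ]) : ℍ[ℝ] :=
  (((s - x).re ^ ℓ / ℓ.factorial : ℝ) : ℍ[ℝ]) * SR s x

/-- The kernel `Π_ℓ S_L⁻¹(s,x)`. -/
def PiL (ℓ : ℕ) (s x : ℍ[ℝ]) : ℍ[ℝ] :=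
  (ℓ.factorial : ℝ)⁻¹ • ∑ k ∈ Finset.range (ℓ + 1),
    (ℓ.choose k : ℝ) • ((star x) ^ k * SL s x * (-(star s)) ^ (ℓ - k))

/-- The kernel `Π_ℓ S_R⁻¹(s,x)`. -/
def PiR (ℓ : ℕ) (s x : ℍ[ℝ]) : ℍ[ℝ] :=
  (ℓ.factorial : ℝ)⁻¹ • ∑ k ∈ Finset.range (ℓ + 1),
    (ℓ.choose k : ℝ) • ((-(star s)) ^ (ℓ - k) * SR s x * (star x) ^ k)

/-- The complex plane `ℂ_j` inside the quaternions. -/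
def Cplane (j : ℍ[ℝ]) : Set ℍ[ℝ] := {z | ∃ u v : ℝ, z = (u : ℍ[ℝ]) + v • j}
namespace Stmt9

def phi (I : ℍ[ℝ]) (c : ℂ) : ℍ[ℝ] := (c.re : ℍ[ℝ]) + c.im • I

variable {I j : ℍ[ℝ]} {c a b : ℂ}

lemma coe_eq_smul_one (r : ℝ) : (r : ℍ[ℝ]) = r • (1 : ℍ[ℝ]) := by
  rw [← Quaternion.coe_mul_eq_smul, mul_one]

lemma sph_star (h : I ∈ Sph) : star I = -I := Quaternion.star_eq_neg.2 h.1

lemma sph_mul_self (h : I ∈ Sph) : I * I = -1 := by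
  have h1 : Quaternion.normSq I = 1 := by
    rw [Quaternion.normSq_eq_norm_mul_self, h.2, one_mul]
  have h2 := Quaternion.star_mul_self I
  rw [sph_star h, h1, neg_mul] at h2
  push_cast at h2
  exact neg_eq_iff_eq_neg.mp h2

lemma sph_ne_zero (h : I ∈ Sph) : I ≠ 0 := by
  intro h0; rw [h0] at h; simpa using h.2

lemma sph_im (h : I ∈ Sph) : I.im = I := by
  conv_rhs => rw [← Quaternion.re_add_im I]
  rw [h.1]; simp

lemma phi_re : (phi I c).re = c.re + c.im * I.re := by
  simp [phi, Quaternion.re_smul, smul_eq_mul]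

lemma phi_im : (phi I c).im = c.im • I.im := by
  simp [phi]

@[simp] lemma phi_real (r : ℝ) : phi I (r : ℂ) = (r : ℍ[ℝ]) := by simp [phi]

@[simp] lemma phi_one : phi I 1 = 1 := by simpa using phi_real (I := I) 1

@[simp] lemma phi_zero : phi I 0 = 0 := by simpa using phi_real (I := I) 0

lemma phi_add : phi I (a + b) = phi I a + phi I b := by
  simp only [phi, Complex.add_re, Complex.add_im, Quaternion.coe_add, add_smul]
  abel

lemma phi_neg : phi I (-a) = -(phi I a) := by
  simp only [phi, Complex.neg_re, Complex.neg_im, Quaternion.coe_neg, neg_smul]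
  abel

lemma phi_sub : phi I (a - b) = phi I a - phi I b := by
  rw [sub_eq_add_neg, phi_add, phi_neg, sub_eq_add_neg]

lemma phi_smul (r : ℝ) : phi I ((r : ℂ) * a) = r • phi I a := by
  simp only [phi, Complex.mul_re, Complex.mul_im, Complex.ofReal_re, Complex.ofReal_im,
    smul_add, zero_mul, mul_zero, sub_zero, zero_add, add_zero]
  rw [Quaternion.smul_coe, smul_smul]

lemma phi_mul (h : I * I = -1) : phi I (a * b) = phi I a * phi I b := by
  simp only [phi, Complex.mul_re, Complex.mul_im, mul_add, add_mul, smul_mul_assoc,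
    mul_smul_comm, smul_smul, h, smul_neg, Quaternion.coe_mul_eq_smul,
    Quaternion.mul_coe_eq_smul, coe_eq_smul_one, one_mul, mul_one]
  module

lemma phi_inv (h : I * I = -1) : phi I c⁻¹ = (phi I c)⁻¹ := by
  rcases eq_or_ne c 0 with rfl | hc
  · simp
  · have : phi I c * phi I c⁻¹ = 1 := by
      rw [← phi_mul h, mul_inv_cancel₀ hc, phi_one]
    exact (inv_eq_of_mul_eq_one_right this).symm

lemma phi_pow (h : I * I = -1) (n : ℕ) : phi I (a ^ n) = (phi I a) ^ n := by
  induction n with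
  | zero => simp
  | succ n ih => rw [pow_succ, pow_succ, phi_mul h, ih]

lemma phi_star (h : I.re = 0) : star (phi I c) = phi I ((starRingEnd ℂ) c) := by
  have hI : star I = -I := Quaternion.star_eq_neg.2 h
  simp [phi, star_smul, hI, Complex.conj_re, Complex.conj_im, neg_smul, smul_neg]

lemma phi_inj (h : I ∈ Sph) : Function.Injective (phi I) := by
  intro a b hab
  have hre : a.re = b.re := by
    have := congrArg QuaternionAlgebra.re hab
    simpa [phi_re, h.1] using this
  have him : a.im • I = b.im • I := by
    have := congrArg Quaternion.im hab
    rwa [phi_im, phi_im, sph_im h] at this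
  have : a.im = b.im := smul_left_injective ℝ (sph_ne_zero h) him
  exact Complex.ext hre this

lemma phi_neg_unit : phi (-I) c = phi I (starRingEnd ℂ c) := by
  simp [phi, smul_neg, neg_smul, sub_eq_add_neg]


lemma phi_sum {t : Finset ℕ} {f : ℕ → ℂ} : phi I (∑ k ∈ t, f k) = ∑ k ∈ t, phi I (f k) := by
  classical
  induction t using Finset.induction_on with
  | empty => simp
  | insert _ _ h ih => rw [Finset.sum_insert h, Finset.sum_insert h, phi_add, ih]

lemma phi_mul_right (z : ℂ) (q : ℍ[ℝ]) : phi I z * q = z.re • q + z.im • (I * q) := by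
  simp [phi, add_mul, smul_mul_assoc, Quaternion.coe_mul_eq_smul]

lemma mem_assocSphere_iff (hj : j ∈ Sph) {s y : ℍ[ℝ]} :
    y ∈ assocSphere s ↔ (y.re = s.re ∧ ‖y.im‖ = ‖s.im‖) := by
  constructor
  · rintro ⟨J, hJ, rfl⟩
    constructor
    · simp [Quaternion.re_smul, hJ.1]
    · have h1 : ((s.re : ℍ[ℝ]) + ‖s.im‖ • J).im = ‖s.im‖ • J := by
        simp [sph_im hJ]
      rw [h1, norm_smul, hJ.2, mul_one, Real.norm_eq_abs, abs_of_nonneg (norm_nonneg _)]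
  · rintro ⟨h1, h2⟩
    by_cases him : y.im = 0
    · refine ⟨j, hj, ?_⟩
      have h3 : ‖s.im‖ = 0 := by rw [← h2, him, norm_zero]
      have hy : y = (y.re : ℍ[ℝ]) := by
        conv_lhs => rw [← Quaternion.re_add_im y, him, add_zero]
      rw [h3, zero_smul, add_zero, ← h1]; exact hy
    · refine ⟨‖y.im‖⁻¹ • y.im, ⟨by simp [Quaternion.re_smul, Quaternion.re_im], ?_⟩, ?_⟩
      · rw [norm_smul, Real.norm_eq_abs, abs_of_nonneg (by positivity),
          inv_mul_cancel₀ (norm_ne_zero_iff.2 him)]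
      · rw [← h1, ← h2, smul_smul, mul_inv_cancel₀ (norm_ne_zero_iff.2 him), one_smul,
          Quaternion.re_add_im]

lemma phi_re' (h : I ∈ Sph) : (phi I c).re = c.re := by rw [phi_re, h.1, mul_zero, add_zero]

lemma phi_norm_im (h : I ∈ Sph) : ‖(phi I c).im‖ = |c.im| := by
  rw [phi_im, sph_im h, norm_smul, h.2, mul_one, Real.norm_eq_abs]

lemma phi_mem_iff (hj : j ∈ Sph) (hI : I ∈ Sph) {s : ℍ[ℝ]} :
    phi I c ∈ assocSphere s ↔ (c.re = s.re ∧ |c.im| = ‖s.im‖) := by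
  rw [mem_assocSphere_iff hj, phi_re' hI, phi_norm_im hI]

lemma exists_rep (hj : j ∈ Sph) (x : ℍ[ℝ]) : ∃ I ∈ Sph, ∃ c : ℂ, x = phi I c := by
  by_cases him : x.im = 0
  · refine ⟨j, hj, (x.re : ℂ), ?_⟩
    rw [phi_real]
    conv_lhs => rw [← Quaternion.re_add_im x, him, add_zero]
  · refine ⟨‖x.im‖⁻¹ • x.im, ⟨by simp [Quaternion.re_smul, Quaternion.re_im], ?_⟩,
      (x.re : ℂ) + (‖x.im‖ : ℝ) * Complex.I, ?_⟩
    · rw [norm_smul, Real.norm_eq_abs, abs_of_nonneg (by positivity),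
        inv_mul_cancel₀ (norm_ne_zero_iff.2 him)]
    · rw [phi]
      simp only [Complex.add_re, Complex.ofReal_re, Complex.mul_re, Complex.I_re,
        Complex.ofReal_im, Complex.I_im, Complex.add_im, Complex.mul_im]
      rw [smul_smul]
      norm_num
      rw [mul_inv_cancel₀ (norm_ne_zero_iff.2 him), one_smul, Quaternion.re_add_im]

/-- The inverse of the complex quadratic. -/
def wC (σ c : ℂ) : ℂ := ((c - σ) * (c - (starRingEnd ℂ) σ))⁻¹

lemma key_quadratic (σ c : ℂ) :
    (c - σ) * (c - (starRingEnd ℂ) σ) = c ^ 2 - ((2 * σ.re : ℝ) : ℂ) * c + ((Complex.normSq σ : ℝ) : ℂ) := by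
  have h1 := Complex.add_conj σ
  have h2 := Complex.mul_conj σ
  linear_combination (-c) * h1 + h2

lemma sq_norm_eq (hj : j ∈ Sph) {s : ℍ[ℝ]} {σ : ℂ} (hσ : s = phi j σ) :
    (‖s‖ ^ 2 : ℝ) = Complex.normSq σ := by
  have h1 : ((‖s‖ ^ 2 : ℝ) : ℍ[ℝ]) = ((Complex.normSq σ : ℝ) : ℍ[ℝ]) := by
    rw [sq, ← Quaternion.normSq_eq_norm_mul_self, ← Quaternion.self_mul_star, hσ,
      phi_star hj.1, ← phi_mul (sph_mul_self hj), Complex.mul_conj, phi_real]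
  exact Quaternion.coe_injective h1

lemma Qker_phi (hI : I * I = -1) {s : ℍ[ℝ]} {σ : ℂ} (hre : s.re = σ.re)
    (hn : (‖s‖ ^ 2 : ℝ) = Complex.normSq σ) (c : ℂ) :
    Qker s (phi I c) = phi I ((c - σ) * (c - (starRingEnd ℂ) σ)) := by
  rw [Qker, key_quadratic, phi_add, phi_sub, phi_pow hI, phi_smul, phi_real, ← hn, hre]
  have h2 : (2 : ℍ[ℝ]) * ((σ.re : ℝ) : ℍ[ℝ]) = ((2 * σ.re : ℝ) : ℍ[ℝ]) := by
    rw [Quaternion.coe_mul, show ((2:ℝ) : ℍ[ℝ]) = 2 by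
      rw [show (2:ℝ) = 1 + 1 by norm_num, Quaternion.coe_add, Quaternion.coe_one]; norm_num]
  rw [h2, Quaternion.coe_mul_eq_smul]

lemma SL_phi (hI : I * I = -1) {s : ℍ[ℝ]} {σ : ℂ} (hre : s.re = σ.re)
    (hn : (‖s‖ ^ 2 : ℝ) = Complex.normSq σ) (c : ℂ) :
    SL s (phi I c) = -(phi I (wC σ c) * (phi I c - star s)) := by
  rw [SL, Qker_phi hI hre hn, ← phi_inv hI, wC]

lemma complex_sum (σ c : ℂ) (h1 : c ≠ σ) (h2 : c ≠ (starRingEnd ℂ) σ) (ℓ : ℕ) :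
    ∑ k ∈ Finset.range (ℓ + 1), (ℓ.choose k : ℂ) *
        ((starRingEnd ℂ) c ^ k * (-(wC σ c * (c - (starRingEnd ℂ) σ))) *
          (-((starRingEnd ℂ) σ)) ^ (ℓ - k))
      = ((starRingEnd ℂ) c - (starRingEnd ℂ) σ) ^ ℓ * (σ - c)⁻¹ := by
  have hca : c - σ ≠ 0 := sub_ne_zero.2 h1
  have hcb : c - (starRingEnd ℂ) σ ≠ 0 := sub_ne_zero.2 h2
  have hw : -(wC σ c * (c - (starRingEnd ℂ) σ)) = (σ - c)⁻¹ := by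
    rw [wC, mul_inv, mul_assoc, inv_mul_cancel₀ hcb, mul_one, ← inv_neg, neg_sub]
  simp only [hw]
  have step : ∀ k ∈ Finset.range (ℓ + 1),
      (ℓ.choose k : ℂ) * ((starRingEnd ℂ) c ^ k * (σ - c)⁻¹ * (-((starRingEnd ℂ) σ)) ^ (ℓ - k))
        = ((starRingEnd ℂ) c ^ k * (-((starRingEnd ℂ) σ)) ^ (ℓ - k) * (ℓ.choose k : ℂ)) * (σ - c)⁻¹ := by
    intro k _; ring
  rw [Finset.sum_congr rfl step, ← Finset.sum_mul, ← add_pow]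
  ring_nf

lemma piL_on_slice (hj : j ∈ Sph) {s : ℍ[ℝ]} {σ : ℂ} (hσ : s = phi j σ) (ℓ : ℕ) (c : ℂ)
    (h1 : c ≠ σ) (h2 : c ≠ (starRingEnd ℂ) σ) :
    PiL ℓ s (phi j c) = (ℓ.factorial : ℝ)⁻¹ •
      ((star (phi j c) - star s) ^ ℓ * (s - phi j c)⁻¹) := by
  have hII := sph_mul_self hj
  have hre : s.re = σ.re := by rw [hσ, phi_re, hj.1, mul_zero, add_zero]
  have hn := sq_norm_eq hj hσ
  have hstar : star s = phi j ((starRingEnd ℂ) σ) := by rw [hσ, phi_star hj.1]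
  have hterm : ∀ k, (star (phi j c)) ^ k * SL s (phi j c) * (-(star s)) ^ (ℓ - k)
      = phi j ((starRingEnd ℂ) c ^ k * (-(wC σ c * (c - (starRingEnd ℂ) σ))) *
          (-((starRingEnd ℂ) σ)) ^ (ℓ - k)) := by
    intro k
    rw [SL_phi hII hre hn, phi_star hj.1, hstar, phi_mul hII, phi_mul hII, phi_pow hII,
      phi_pow hII, phi_neg, phi_neg, phi_mul hII, phi_sub]
  have hsmul : ∀ k, (ℓ.choose k : ℝ) • phi j ((starRingEnd ℂ) c ^ k *
        (-(wC σ c * (c - (starRingEnd ℂ) σ))) * (-((starRingEnd ℂ) σ)) ^ (ℓ - k))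
      = phi j ((ℓ.choose k : ℂ) * ((starRingEnd ℂ) c ^ k *
        (-(wC σ c * (c - (starRingEnd ℂ) σ))) * (-((starRingEnd ℂ) σ)) ^ (ℓ - k))) := by
    intro k
    rw [show ((ℓ.choose k : ℂ)) = (((ℓ.choose k : ℝ)) : ℂ) by push_cast; ring, phi_smul]
  have hRHS : (ℓ.factorial : ℝ)⁻¹ • ((star (phi j c) - star s) ^ ℓ * (s - phi j c)⁻¹)
      = (ℓ.factorial : ℝ)⁻¹ • phi j ((((starRingEnd ℂ) c - (starRingEnd ℂ) σ)) ^ ℓ * (σ - c)⁻¹) := by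
    congr 1
    rw [phi_mul hII, phi_pow hII, phi_sub, phi_inv hII, phi_sub, phi_star hj.1, hstar]
    conv_lhs => rw [hσ]
  rw [PiL]
  simp only [hterm, hsmul]
  rw [← phi_sum, hRHS]
  congr 1
  exact congrArg (phi j) (complex_sum σ c h1 h2 ℓ)

lemma piL_rep (hj : j ∈ Sph) {s : ℍ[ℝ]} {σ : ℂ} (hσ : s = phi j σ) (ℓ : ℕ) :
    ∃ A B : ℂ → ℍ[ℝ], ∀ I ∈ Sph, ∀ c : ℂ, PiL ℓ s (phi I c) = A c + I * B c := by
  have hre : s.re = σ.re := by rw [hσ, phi_re, hj.1, mul_zero, add_zero]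
  have hn := sq_norm_eq hj hσ
  refine ⟨fun c => (ℓ.factorial : ℝ)⁻¹ • ∑ k ∈ Finset.range (ℓ + 1), (ℓ.choose k : ℝ) •
      ((-(((starRingEnd ℂ) c) ^ k * wC σ c * c)).re • (-(star s)) ^ (ℓ - k)
        + (((starRingEnd ℂ) c) ^ k * wC σ c).re • (star s * (-(star s)) ^ (ℓ - k))),
    fun c => (ℓ.factorial : ℝ)⁻¹ • ∑ k ∈ Finset.range (ℓ + 1), (ℓ.choose k : ℝ) •
      ((-(((starRingEnd ℂ) c) ^ k * wC σ c * c)).im • (-(star s)) ^ (ℓ - k)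
        + (((starRingEnd ℂ) c) ^ k * wC σ c).im • (star s * (-(star s)) ^ (ℓ - k))),
    ?_⟩
  intro I hI c
  have hII := sph_mul_self hI
  have hterm : ∀ k, (star (phi I c)) ^ k * SL s (phi I c) * (-(star s)) ^ (ℓ - k)
      = phi I (-(((starRingEnd ℂ) c) ^ k * wC σ c * c)) * (-(star s)) ^ (ℓ - k)
        + phi I (((starRingEnd ℂ) c) ^ k * wC σ c) * (star s * (-(star s)) ^ (ℓ - k)) := by
    intro k
    rw [SL_phi hII hre hn, phi_star hI.1, ← phi_pow hII, phi_neg, phi_mul hII, phi_mul hII,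
      mul_sub]
    noncomm_ring
  rw [PiL]
  simp only [hterm, phi_mul_right]
  rw [mul_smul_comm, Finset.mul_sum, ← smul_add, ← Finset.sum_add_distrib]
  refine congrArg _ (Finset.sum_congr rfl fun k _ => ?_)
  simp only [mul_smul_comm, mul_add]
  module

end Stmt9
open Stmt9


/-- Restriction and uniqueness for the kernel `Π_ℓ S_L⁻¹`. -/
theorem statement9 (j : ℍ[ℝ]) (hj : j ∈ Sph) (ℓ : ℕ) (s : ℍ[ℝ]) (hs : s ∈ Cplane j) :
    (∀ z ∈ Cplane j, z ∉ assocSphere s →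
      PiL ℓ s z = (ℓ.factorial : ℝ)⁻¹ • ((star z - star s) ^ ℓ * (s - z)⁻¹)) ∧
    (∀ K : ℍ[ℝ] → ℍ[ℝ], PolySliceMonL (assocSphere s)ᶜ (ℓ + 1) K →
      (∀ z ∈ Cplane j, z ∉ assocSphere s →
        K z = (ℓ.factorial : ℝ)⁻¹ • ((star z - star s) ^ ℓ * (s - z)⁻¹)) →
      ∀ x ∉ assocSphere s, K x = PiL ℓ s x) := by
  obtain ⟨u, v, hsuv⟩ := hs
  set σ : ℂ := (u : ℂ) + (v : ℝ) * Complex.I with hσdef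
  have hσ : s = phi j σ := by
    rw [hsuv, phi, hσdef]
    simp
  have hre : s.re = σ.re := by rw [hσ, phi_re' hj]
  have hsim : ‖s.im‖ = |σ.im| := by rw [hσ, phi_norm_im hj]
  have hne : ∀ {I : ℍ[ℝ]}, I ∈ Sph → ∀ {c : ℂ}, phi I c ∉ assocSphere s →
      c ≠ σ ∧ c ≠ (starRingEnd ℂ) σ := by
    intro I hI c hc
    constructor
    · rintro rfl
      exact hc ((phi_mem_iff hj hI).2 ⟨hre.symm, hsim.symm⟩)
    · rintro rfl
      refine hc ((phi_mem_iff hj hI).2 ⟨?_, ?_⟩)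
      · rw [Complex.conj_re, ← hre]
      · rw [Complex.conj_im, abs_neg, ← hsim]
  have part1 : ∀ z ∈ Cplane j, z ∉ assocSphere s →
      PiL ℓ s z = (ℓ.factorial : ℝ)⁻¹ • ((star z - star s) ^ ℓ * (s - z)⁻¹) := by
    rintro z ⟨a, b, rfl⟩ hz
    have hz' : ((a : ℍ[ℝ]) + b • j) = phi j ((a : ℂ) + (b : ℝ) * Complex.I) := by
      rw [phi]; simp
    rw [hz'] at hz ⊢
    obtain ⟨h1, h2⟩ := hne hj hz
    exact piL_on_slice hj hσ ℓ _ h1 h2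
  refine ⟨part1, ?_⟩
  rintro K ⟨F₀, F₁, hcomp, _⟩ hres x hx
  obtain ⟨I, hI, c, rfl⟩ := exists_rep hj x
  have hkey : ¬(c.re = s.re ∧ |c.im| = ‖s.im‖) := fun h => hx ((phi_mem_iff hj hI).2 h)
  have hmemJ : ∀ J ∈ Sph, phi J c ∉ assocSphere s := fun J hJ h =>
    hkey ((phi_mem_iff hj hJ).1 h)
  have hmemconj : phi j ((starRingEnd ℂ) c) ∉ assocSphere s := by
    intro h
    have h2 := (phi_mem_iff hj hj).1 h
    refine hkey ⟨?_, ?_⟩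
    · rw [← h2.1, Complex.conj_re]
    · rw [← h2.2, Complex.conj_im, abs_neg]
  have hp : ((c.re, c.im) : ℝ × ℝ) ∈ slicePlane (assocSphere s)ᶜ := fun J hJ => hmemJ J hJ
  have hmj : -j ∈ Sph := ⟨by simp [hj.1], by rw [norm_neg]; exact hj.2⟩
  obtain ⟨A, B, hAB⟩ := piL_rep hj hσ ℓ
  have e1 : K (phi j c) = PiL ℓ s (phi j c) := by
    rw [hres (phi j c) ⟨c.re, c.im, rfl⟩ (hmemJ j hj), part1 (phi j c) ⟨c.re, c.im, rfl⟩ (hmemJ j hj)]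
  have e2 : K (phi j ((starRingEnd ℂ) c)) = PiL ℓ s (phi j ((starRingEnd ℂ) c)) := by
    rw [hres (phi j ((starRingEnd ℂ) c)) ⟨((starRingEnd ℂ) c).re, ((starRingEnd ℂ) c).im, rfl⟩
        hmemconj,
      part1 (phi j ((starRingEnd ℂ) c)) ⟨((starRingEnd ℂ) c).re, ((starRingEnd ℂ) c).im, rfl⟩
        hmemconj]
  have hK1 : K (phi j c) = F₀ (c.re, c.im) + j * F₁ (c.re, c.im) :=
    hcomp (c.re, c.im) hp j hj
  have hK2 : K (phi (-j) c) = F₀ (c.re, c.im) + (-j) * F₁ (c.re, c.im) :=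
    hcomp (c.re, c.im) hp (-j) hmj
  have eq1 : F₀ (c.re, c.im) + j * F₁ (c.re, c.im) = A c + j * B c :=
    hK1.symm.trans (e1.trans (hAB j hj c))
  have eq2 : F₀ (c.re, c.im) + (-j) * F₁ (c.re, c.im) = A c + (-j) * B c := by
    refine hK2.symm.trans ?_
    rw [phi_neg_unit, e2, phi_neg_unit.symm]
    exact hAB (-j) hmj c
  have hF0 : F₀ (c.re, c.im) = A c := by
    have h2 : (2 : ℝ) • F₀ (c.re, c.im) = (2 : ℝ) • A c := by
      calc (2 : ℝ) • F₀ (c.re, c.im)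
          = (F₀ (c.re, c.im) + j * F₁ (c.re, c.im))
            + (F₀ (c.re, c.im) + (-j) * F₁ (c.re, c.im)) := by
            rw [neg_mul]; module
        _ = (A c + j * B c) + (A c + (-j) * B c) := by rw [eq1, eq2]
        _ = (2 : ℝ) • A c := by rw [neg_mul]; module
    exact smul_right_injective ℍ[ℝ] (by norm_num : (2 : ℝ) ≠ 0) h2
  have hF1 : F₁ (c.re, c.im) = B c := by
    have h2 : (2 : ℝ) • (j * F₁ (c.re, c.im)) = (2 : ℝ) • (j * B c) := by
      calc (2 : ℝ) • (j * F₁ (c.re, c.im))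
          = (F₀ (c.re, c.im) + j * F₁ (c.re, c.im))
            - (F₀ (c.re, c.im) + (-j) * F₁ (c.re, c.im)) := by
            rw [neg_mul]; module
        _ = (A c + j * B c) - (A c + (-j) * B c) := by rw [eq1, eq2]
        _ = (2 : ℝ) • (j * B c) := by rw [neg_mul]; module
    have h3 : j * F₁ (c.re, c.im) = j * B c :=
      smul_right_injective ℍ[ℝ] (by norm_num : (2 : ℝ) ≠ 0) h2
    exact mul_left_cancel₀ (sph_ne_zero hj) h3
  have hKI : K (phi I c) = F₀ (c.re, c.im) + I * F₁ (c.re, c.im) :=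
    hcomp (c.re, c.im) hp I hI
  rw [hKI, hF0, hF1, hAB I hI c]
end
end

section
/- Modified S-resolvent series (quaternionic case of the paper's operator theorem, with the operator T replaced by a quaternion q). Let q, s, B ∈ ℍ with ‖q‖ < ‖s‖. Then q² − 2(Re s)·q + ‖s‖² ≠ 0; the series ∑_{m=0}^{∞} q^m·B·s^{−(m+1)} converges in ℍ (indeed absolutely, by ‖q‖ < ‖s‖) with sum −(q² − 2(Re s)·q + ‖s‖²)⁻¹·(q·B − B·s̄); and the series ∑_{m=0}^{∞} s^{−(m+1)}·B·q^m converges in ℍ with sum −(B·q − s̄·B)·(q² − 2(Re s)·q + ‖s‖²)⁻¹. -/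
noncomputable section

open scoped Quaternion
open Finset

lemma my_key0 (q s B : ℍ[ℝ]) :
    Qker s q * B = q * q * B - q * B * star s - (q * B * s - B * (star s * s)) := by
  have hT : ∀ a : ℍ[ℝ], (2 * (s.re : ℍ[ℝ])) * a = a * (s + star s) := fun a => by
    rw [← Quaternion.self_add_star, Quaternion.self_add_star,
      show (2 * (s.re:ℍ[ℝ])) * a = (s.re:ℍ[ℝ]) * a * 2 by noncomm_ring,
      (Quaternion.coe_commute s.re a).eq]
    noncomm_ring
  have hN : ∀ a : ℍ[ℝ], ((‖s‖^2 : ℝ) : ℍ[ℝ]) * a = a * (star s * s) := fun a => by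
    rw [(Quaternion.coe_commute (‖s‖^2) a).eq,
      show ((‖s‖^2 : ℝ) : ℍ[ℝ]) = star s * s by
        rw [sq, ← Quaternion.normSq_eq_norm_mul_self, ← Quaternion.star_mul_self]]
  calc Qker s q * B
      = q^2*B - (2*(s.re:ℍ[ℝ]))*(q*B) + ((‖s‖^2:ℝ):ℍ[ℝ])*B := by rw [Qker]; noncomm_ring
    _ = q^2*B - (q*B)*(s + star s) + B*(star s * s) := by rw [hT, hN]
    _ = _ := by noncomm_ring

lemma my_key0R (q s B : ℍ[ℝ]) :
    B * Qker s q = B * q * q - s * (B * q) - (star s * (B * q) - s * (star s * B)) := by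
  have hT : ∀ a : ℍ[ℝ], a * (2 * (s.re : ℍ[ℝ])) = (s + star s) * a := fun a => by
    rw [← Quaternion.self_add_star, Quaternion.self_add_star,
      show a * (2 * (s.re:ℍ[ℝ])) = 2 * (a * (s.re:ℍ[ℝ])) by noncomm_ring,
      ← (Quaternion.coe_commute s.re a).eq]
    noncomm_ring
  have hN : ∀ a : ℍ[ℝ], a * ((‖s‖^2 : ℝ) : ℍ[ℝ]) = (s * star s) * a := fun a => by
    rw [← (Quaternion.coe_commute (‖s‖^2) a).eq,
      show ((‖s‖^2 : ℝ) : ℍ[ℝ]) = s * star s by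
        rw [sq, ← Quaternion.normSq_eq_norm_mul_self, ← Quaternion.self_mul_star]]
  calc B * Qker s q
      = B*q^2 - B*((2*(s.re:ℍ[ℝ]))*q) + B*((‖s‖^2:ℝ):ℍ[ℝ]) := by rw [Qker]; noncomm_ring
    _ = B*q^2 - (B*q)*(2*(s.re:ℍ[ℝ])) + B*((‖s‖^2:ℝ):ℍ[ℝ]) := by
        rw [show (2*(s.re:ℍ[ℝ]))*q = q*(2*(s.re:ℍ[ℝ])) from
          (Commute.mul_left (Commute.ofNat_left 2 q) (Quaternion.coe_commute s.re q)).eq,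
          mul_assoc]
    _ = B*q^2 - (s + star s)*(B*q) + (s * star s)*B := by rw [hT, hN]
    _ = _ := by noncomm_ring

lemma my_qcomm (q s : ℍ[ℝ]) (m : ℕ) : Qker s q * q ^ m = q ^ m * Qker s q := by
  have : Commute (Qker s q) (q ^ m) := by
    rw [Qker]
    apply Commute.add_left
    · apply Commute.sub_left
      · exact (Commute.refl q).pow_pow 2 m
      · exact Commute.mul_left
          (Commute.mul_left (Commute.ofNat_left 2 (q^m)) (Quaternion.coe_commute s.re (q^m)))
          ((Commute.refl q).pow_right m)
    · exact Quaternion.coe_commute _ _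
  exact this.eq

lemma my_keyG (q s B : ℍ[ℝ]) (m : ℕ) :
    Qker s q * (q ^ m * B) =
      q ^ (m + 2) * B - q ^ (m + 1) * B * star s
        - (q ^ (m + 1) * B * s - q ^ m * B * (star s * s)) := by
  rw [show q^(m+2) = q^m*(q*q) by rw [pow_add, pow_two], pow_succ,
    ← mul_assoc, my_qcomm, mul_assoc, my_key0]
  noncomm_ring

lemma my_keyGR (q s B : ℍ[ℝ]) (m : ℕ) :
    (B * q ^ m) * Qker s q =
      B * q ^ (m + 2) - s * (B * q ^ (m + 1))
        - (star s * (B * q ^ (m + 1)) - s * (star s * (B * q ^ m))) := by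
  rw [show q^(m+2) = (q*q)*q^m by rw [show m+2 = 2+m by omega, pow_add, pow_two],
    show q^(m+1) = q*q^m by rw [show m+1 = 1+m by omega, pow_add, pow_one],
    mul_assoc, ← my_qcomm, ← mul_assoc, my_key0R]
  noncomm_ring

lemma my_commStarInv (s : ℍ[ℝ]) (k : ℕ) : Commute (star s) ((s⁻¹) ^ k) := by
  have h1 : Commute (star s) s := by
    rw [Commute, SemiconjBy, Quaternion.star_mul_self, Quaternion.self_mul_star]
  exact (h1.inv_right₀).pow_right k

lemma my_invpow (s : ℍ[ℝ]) (hs : s ≠ 0) (m : ℕ) : (s⁻¹) ^ (m + 1) * s = (s⁻¹) ^ m := by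
  rw [pow_succ, mul_assoc, inv_mul_cancel₀ hs, mul_one]

lemma my_keyL (q s B : ℍ[ℝ]) (hs : s ≠ 0) (m : ℕ) :
    Qker s q * (q ^ m * B * (s⁻¹) ^ (m + 1)) =
      (q ^ (m + 1 + 1) * B * (s⁻¹) ^ (m + 1) - q ^ (m + 1) * B * star s * (s⁻¹) ^ (m + 1))
      - (q ^ (m + 1) * B * (s⁻¹) ^ m - q ^ m * B * star s * (s⁻¹) ^ m) := by
  have h3 : (s⁻¹)^(m+1) * (star s * s) = star s * (s⁻¹)^m := by
    rw [← mul_assoc, ← (my_commStarInv s (m+1)).eq, mul_assoc, my_invpow s hs]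
  rw [mul_assoc (q^m) B, my_keyG]
  simp only [mul_assoc, my_invpow s hs, h3, ← (my_commStarInv s (m+1)).eq]

lemma my_keyLR (q s B : ℍ[ℝ]) (hs : s ≠ 0) (m : ℕ) :
    ((s⁻¹) ^ (m + 1) * B * q ^ m) * Qker s q =
      ((s⁻¹) ^ (m + 1) * B * q ^ (m + 1 + 1) - (s⁻¹) ^ (m + 1) * (star s * B) * q ^ (m + 1))
      - ((s⁻¹) ^ m * B * q ^ (m + 1) - (s⁻¹) ^ m * (star s * B) * q ^ m) := by
  have hsi : s * (s⁻¹)^(m+1) = (s⁻¹)^m := by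
    rw [((Commute.refl s).inv_right₀.pow_right (m+1)).eq, my_invpow s hs]
  have h1 : s * ((s⁻¹)^(m+1) * (B * q^(m+1))) = (s⁻¹)^m * (B * q^(m+1)) := by
    rw [← mul_assoc, hsi]
  have h2 : star s * ((s⁻¹)^(m+1) * (B * q^(m+1))) = (s⁻¹)^(m+1) * (star s * (B * q^(m+1))) := by
    rw [← mul_assoc, (my_commStarInv s (m+1)).eq, mul_assoc]
  have h4 : s * (star s * ((s⁻¹)^(m+1) * (B * q^m))) = (s⁻¹)^m * (star s * (B * q^m)) := by
    rw [← mul_assoc (star s), (my_commStarInv s (m+1)).eq, mul_assoc ((s⁻¹)^(m+1)),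
      ← mul_assoc s, hsi]
  rw [my_keyGR q s ((s⁻¹)^(m+1) * B) m]
  simp only [mul_assoc, h1, h2, h4]
  noncomm_ring

lemma my_qker_ne (q s : ℍ[ℝ]) (h : ‖q‖ < ‖s‖) : Qker s q ≠ 0 := by
  intro h0
  rw [Qker, two_mul, Quaternion.ext_iff] at h0
  simp [pow_two, Quaternion.re_mul, Quaternion.imI_mul, Quaternion.imJ_mul,
    Quaternion.imK_mul] at h0
  obtain ⟨h1, h2, h3, h4⟩ := h0
  have hq2 : q.re * q.re + q.imI * q.imI + q.imJ * q.imJ + q.imK * q.imK < ‖s‖ * ‖s‖ := by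
    have := mul_self_lt_mul_self (norm_nonneg q) h
    rw [← Quaternion.normSq_eq_norm_mul_self, Quaternion.normSq_def'] at this
    nlinarith [this]
  have hs2 : s.re * s.re ≤ ‖s‖ * ‖s‖ := by
    have := Quaternion.normSq_def' s
    rw [Quaternion.normSq_eq_norm_mul_self] at this
    nlinarith [this]
  by_cases hab : q.re = s.re
  · rw [hab] at h1 hq2
    nlinarith [h1, hq2]
  · have e2 : (q.re - s.re) * q.imI = 0 := by linarith [h2]
    have e3 : (q.re - s.re) * q.imJ = 0 := by linarith [h3]
    have e4 : (q.re - s.re) * q.imK = 0 := by linarith [h4]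
    have hne : q.re - s.re ≠ 0 := sub_ne_zero_of_ne hab
    have x0 : q.imI = 0 := by
      rcases mul_eq_zero.mp e2 with h' | h'; exact absurd h' hne; exact h'
    have y0 : q.imJ = 0 := by
      rcases mul_eq_zero.mp e3 with h' | h'; exact absurd h' hne; exact h'
    have z0 : q.imK = 0 := by
      rcases mul_eq_zero.mp e4 with h' | h'; exact absurd h' hne; exact h'
    rw [x0, y0, z0] at h1 hq2
    have h7 : (q.re - s.re) ^ 2 ≤ 0 := by nlinarith [h1, hs2]
    have := pow_eq_zero_iff (n := 2) (by norm_num) |>.mp (le_antisymm h7 (sq_nonneg _))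
    exact hne this

lemma my_sumNormL (q s B : ℍ[ℝ]) (h : ‖q‖ < ‖s‖) :
    Summable (fun m : ℕ => ‖q ^ m * B * (s⁻¹) ^ (m + 1)‖) := by
  have hs0 : (0:ℝ) < ‖s‖ := lt_of_le_of_lt (norm_nonneg q) h
  have hr0 : 0 ≤ ‖q‖ * ‖s‖⁻¹ := by positivity
  have hr1 : ‖q‖ * ‖s‖⁻¹ < 1 := by rw [← div_eq_mul_inv]; exact (div_lt_one hs0).mpr h
  apply Summable.of_nonneg_of_le (fun m => norm_nonneg _) (fun m => ?_)
    ((summable_geometric_of_lt_one hr0 hr1).mul_left (‖B‖ * ‖s‖⁻¹))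
  rw [norm_mul, norm_mul, norm_pow, norm_pow, norm_inv]
  exact le_of_eq (by rw [mul_pow]; ring)

lemma my_sumNormR (q s B : ℍ[ℝ]) (h : ‖q‖ < ‖s‖) :
    Summable (fun m : ℕ => ‖(s⁻¹) ^ (m + 1) * B * q ^ m‖) := by
  have hs0 : (0:ℝ) < ‖s‖ := lt_of_le_of_lt (norm_nonneg q) h
  have hr0 : 0 ≤ ‖q‖ * ‖s‖⁻¹ := by positivity
  have hr1 : ‖q‖ * ‖s‖⁻¹ < 1 := by rw [← div_eq_mul_inv]; exact (div_lt_one hs0).mpr h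
  apply Summable.of_nonneg_of_le (fun m => norm_nonneg _) (fun m => ?_)
    ((summable_geometric_of_lt_one hr0 hr1).mul_left (‖B‖ * ‖s‖⁻¹))
  rw [norm_mul, norm_mul, norm_pow, norm_pow, norm_inv]
  exact le_of_eq (by rw [mul_pow]; ring)

lemma my_hasSumL (q s B : ℍ[ℝ]) (h : ‖q‖ < ‖s‖) :
    HasSum (fun m : ℕ => q ^ m * B * (s⁻¹) ^ (m + 1))
      (-((Qker s q)⁻¹ * (q * B - B * star s))) := by
  have hs0 : (0:ℝ) < ‖s‖ := lt_of_le_of_lt (norm_nonneg q) h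
  have hs : s ≠ 0 := norm_pos_iff.mp hs0
  have hr0 : 0 ≤ ‖q‖ * ‖s‖⁻¹ := by positivity
  have hr1 : ‖q‖ * ‖s‖⁻¹ < 1 := by rw [← div_eq_mul_inv]; exact (div_lt_one hs0).mpr h
  set f : ℕ → ℍ[ℝ] := fun m => q ^ m * B * (s⁻¹) ^ (m + 1) with hfdef
  have hf : Summable f := (my_sumNormL q s B h).of_norm
  set A : ℕ → ℍ[ℝ] := fun m => q ^ (m+1) * B * (s⁻¹) ^ m - q ^ m * B * star s * (s⁻¹) ^ m
    with hAdef
  have hA0 : Filter.Tendsto A Filter.atTop (nhds 0) := by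
    apply squeeze_zero_norm (a := fun m => (‖B‖ * (‖q‖ + ‖s‖)) * ((‖q‖ * ‖s‖⁻¹) ^ m))
    · intro m
      refine le_trans (norm_sub_le _ _) ?_
      simp only [norm_mul, norm_pow, norm_inv, norm_star]
      exact le_of_eq (by rw [mul_pow]; ring)
    · simpa using (tendsto_pow_atTop_nhds_zero_of_lt_one hr0 hr1).const_mul (‖B‖ * (‖q‖ + ‖s‖))
  have hkey : ∀ n, ∑ m ∈ Finset.range n, Qker s q * f m = A n - A 0 := fun n => by
    rw [Finset.sum_congr rfl (fun m _ => my_keyL q s B hs m), Finset.sum_range_sub A]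
  have ht1 : Filter.Tendsto (fun n => ∑ m ∈ Finset.range n, Qker s q * f m) Filter.atTop
      (nhds (Qker s q * ∑' m, f m)) := (hf.hasSum.mul_left _).tendsto_sum_nat
  have ht2 : Filter.Tendsto (fun n => A n - A 0) Filter.atTop (nhds (0 - A 0)) := hA0.sub_const _
  have hlim : Qker s q * (∑' m, f m) = 0 - A 0 := by
    refine tendsto_nhds_unique ?_ ht2
    simpa only [hkey] using ht1
  have hQ : Qker s q ≠ 0 := my_qker_ne q s h
  have hA0' : A 0 = q * B - B * star s := by simp [hAdef]
  have hfin : (∑' m, f m) = -((Qker s q)⁻¹ * (q * B - B * star s)) := by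
    calc ∑' m, f m = (Qker s q)⁻¹ * (Qker s q * ∑' m, f m) := by
          rw [← mul_assoc, inv_mul_cancel₀ hQ, one_mul]
      _ = _ := by rw [hlim, hA0', zero_sub, mul_neg]
  exact hfin ▸ hf.hasSum

lemma my_hasSumR (q s B : ℍ[ℝ]) (h : ‖q‖ < ‖s‖) :
    HasSum (fun m : ℕ => (s⁻¹) ^ (m + 1) * B * q ^ m)
      (-((B * q - star s * B) * (Qker s q)⁻¹)) := by
  have hs0 : (0:ℝ) < ‖s‖ := lt_of_le_of_lt (norm_nonneg q) h
  have hs : s ≠ 0 := norm_pos_iff.mp hs0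
  have hr0 : 0 ≤ ‖q‖ * ‖s‖⁻¹ := by positivity
  have hr1 : ‖q‖ * ‖s‖⁻¹ < 1 := by rw [← div_eq_mul_inv]; exact (div_lt_one hs0).mpr h
  set f : ℕ → ℍ[ℝ] := fun m => (s⁻¹) ^ (m + 1) * B * q ^ m with hfdef
  have hf : Summable f := (my_sumNormR q s B h).of_norm
  set A : ℕ → ℍ[ℝ] := fun m => (s⁻¹) ^ m * B * q ^ (m+1) - (s⁻¹) ^ m * (star s * B) * q ^ m
    with hAdef
  have hA0 : Filter.Tendsto A Filter.atTop (nhds 0) := by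
    apply squeeze_zero_norm (a := fun m => (‖B‖ * (‖q‖ + ‖s‖)) * ((‖q‖ * ‖s‖⁻¹) ^ m))
    · intro m
      refine le_trans (norm_sub_le _ _) ?_
      simp only [norm_mul, norm_pow, norm_inv, norm_star]
      exact le_of_eq (by rw [mul_pow]; ring)
    · simpa using (tendsto_pow_atTop_nhds_zero_of_lt_one hr0 hr1).const_mul (‖B‖ * (‖q‖ + ‖s‖))
  have hkey : ∀ n, ∑ m ∈ Finset.range n, f m * Qker s q = A n - A 0 := fun n => by
    rw [Finset.sum_congr rfl (fun m _ => my_keyLR q s B hs m), Finset.sum_range_sub A]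
  have ht1 : Filter.Tendsto (fun n => ∑ m ∈ Finset.range n, f m * Qker s q) Filter.atTop
      (nhds ((∑' m, f m) * Qker s q)) := (hf.hasSum.mul_right _).tendsto_sum_nat
  have ht2 : Filter.Tendsto (fun n => A n - A 0) Filter.atTop (nhds (0 - A 0)) := hA0.sub_const _
  have hlim : (∑' m, f m) * Qker s q = 0 - A 0 := by
    refine tendsto_nhds_unique ?_ ht2
    simpa only [hkey] using ht1
  have hQ : Qker s q ≠ 0 := my_qker_ne q s h
  have hA0' : A 0 = B * q - star s * B := by simp [hAdef]
  have hfin : (∑' m, f m) = -((B * q - star s * B) * (Qker s q)⁻¹) := by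
    calc ∑' m, f m = ((∑' m, f m) * Qker s q) * (Qker s q)⁻¹ := by
          rw [mul_assoc, mul_inv_cancel₀ hQ, mul_one]
      _ = _ := by rw [hlim, hA0', zero_sub, neg_mul]
  exact hfin ▸ hf.hasSum

/-- Modified `S`-resolvent series (quaternionic case). -/
theorem statement10 (q s B : ℍ[ℝ]) (h : ‖q‖ < ‖s‖) :
    Qker s q ≠ 0 ∧
    Summable (fun m : ℕ => ‖q ^ m * B * (s⁻¹) ^ (m + 1)‖) ∧
    HasSum (fun m : ℕ => q ^ m * B * (s⁻¹) ^ (m + 1))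
      (-((Qker s q)⁻¹ * (q * B - B * star s))) ∧
    Summable (fun m : ℕ => ‖(s⁻¹) ^ (m + 1) * B * q ^ m‖) ∧
    HasSum (fun m : ℕ => (s⁻¹) ^ (m + 1) * B * q ^ m)
      (-((B * q - star s * B) * (Qker s q)⁻¹)) := by
  exact ⟨my_qker_ne q s h, my_sumNormL q s B h, my_hasSumL q s B h,
    my_sumNormR q s B h, my_hasSumR q s B h⟩
end
end

section
/- Modified left and right S-resolvent equations (quaternionic case, with the operator T replaced by a quaternion p). Let p, B, s ∈ ℍ with p·B = B·p and Q_s(p) ≠ 0. Then: (i) −Q_s(p)⁻¹·(p·B − B·s̄) = B·S_L⁻¹(s,p) and −(B·p − s̄·B)·Q_s(p)⁻¹ = S_R⁻¹(s,p)·B; (ii) (B·S_L⁻¹(s,p))·s − p·(B·S_L⁻¹(s,p)) = B; (iii) s·(S_R⁻¹(s,p)·B) − (S_R⁻¹(s,p)·B)·p = B. -/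
noncomputable section

open scoped Quaternion
open Finset

lemma qcomm (s p : ℍ[ℝ]) (B : ℍ[ℝ]) (hc : Commute p B) : Commute (Qker s p) B := by
  rw [Qker]
  have h2re : Commute (2 * ((s.re : ℝ) : ℍ[ℝ])) B := by
    have h : (2 * ((s.re : ℝ) : ℍ[ℝ])) = (((2 * s.re : ℝ)) : ℍ[ℝ]) := (Quaternion.coe_mul 2 s.re).symm
    rw [h]; exact Quaternion.coe_commute _ _
  exact ((hc.pow_left 2).sub_left (h2re.mul_left hc)).add_left (Quaternion.coe_commute _ _)

lemma qkey_left (s p : ℍ[ℝ]) : Qker s p = p * (p - star s) - (p - star s) * s := by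
  have h1 : star s * s = ((‖s‖ ^ 2 : ℝ) : ℍ[ℝ]) := by
    rw [Quaternion.star_mul_self, pow_two, ← Quaternion.normSq_eq_norm_mul_self]
  have h2 : p * star s + p * s = 2 * ((s.re : ℝ) : ℍ[ℝ]) * p := by
    rw [← mul_add, add_comm, Quaternion.self_add_star]
    have h : (2 * ((s.re : ℝ) : ℍ[ℝ])) = (((2 * s.re : ℝ)) : ℍ[ℝ]) := (Quaternion.coe_mul 2 s.re).symm
    rw [h]
    exact (Quaternion.coe_commutes _ p).symm
  have expand : p * (p - star s) - (p - star s) * s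
      = p ^ 2 - (p * star s + p * s) + star s * s := by noncomm_ring
  rw [expand, h1, h2, Qker]

lemma qkey_right (s p : ℍ[ℝ]) : Qker s p = (p - star s) * p - s * (p - star s) := by
  have h1 : s * star s = ((‖s‖ ^ 2 : ℝ) : ℍ[ℝ]) := by
    rw [Quaternion.self_mul_star, pow_two, ← Quaternion.normSq_eq_norm_mul_self]
  have h2 : star s * p + s * p = 2 * ((s.re : ℝ) : ℍ[ℝ]) * p := by
    rw [← add_mul, add_comm, Quaternion.self_add_star]
  have expand : (p - star s) * p - s * (p - star s)
      = p ^ 2 - (star s * p + s * p) + s * star s := by noncomm_ring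
  rw [expand, h1, h2, Qker]

lemma resolvL (s p : ℍ[ℝ]) (hQ : Qker s p ≠ 0) : SL s p * s - p * SL s p = 1 := by
  have hQp : Commute (Qker s p)⁻¹ p := (qcomm s p p (Commute.refl p)).inv_left₀
  rw [SL, neg_mul, mul_neg, sub_neg_eq_add, neg_add_eq_sub]
  rw [← mul_assoc, ← hQp.eq, mul_assoc, mul_assoc, ← mul_sub, ← qkey_left,
    inv_mul_cancel₀ hQ]

lemma resolvR (s p : ℍ[ℝ]) (hQ : Qker s p ≠ 0) : s * SR s p - SR s p * p = 1 := by
  have hQp : Commute (Qker s p)⁻¹ p := (qcomm s p p (Commute.refl p)).inv_left₀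
  rw [SR, neg_mul, mul_neg, sub_neg_eq_add, neg_add_eq_sub]
  rw [mul_assoc, hQp.eq, ← mul_assoc, ← mul_assoc, ← sub_mul, ← qkey_right,
    mul_inv_cancel₀ hQ]


/-- Modified left and right `S`-resolvent equations (quaternionic case). -/
theorem statement11 (p B s : ℍ[ℝ]) (hc : p * B = B * p) (hQ : Qker s p ≠ 0) :
    (-((Qker s p)⁻¹ * (p * B - B * star s)) = B * SL s p ∧
      -((B * p - star s * B) * (Qker s p)⁻¹) = SR s p * B) ∧
    (B * SL s p) * s - p * (B * SL s p) = B ∧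
    s * (SR s p * B) - (SR s p * B) * p = B := by
  have hpB : Commute p B := hc
  have hQB : Commute (Qker s p)⁻¹ B := (qcomm s p B hpB).inv_left₀
  constructor
  · constructor
    · rw [SL, mul_neg]
      congr 1
      rw [← mul_assoc, ← hQB.eq, mul_assoc]
      congr 1
      rw [mul_sub, hc]
    · rw [SR, neg_mul]
      congr 1
      rw [mul_assoc, hQB.eq, ← mul_assoc]
      congr 1
      rw [sub_mul, ← hc]
  constructor
  · have := resolvL s p hQ
    calc B * SL s p * s - p * (B * SL s p)
        = B * (SL s p * s - p * SL s p) := by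
          have e : p * (B * SL s p) = B * (p * SL s p) := by rw [← mul_assoc, hc, mul_assoc]
          rw [mul_sub, e, ← mul_assoc, ← mul_assoc]
      _ = B := by rw [this, mul_one]
  · have := resolvR s p hQ
    calc s * (SR s p * B) - SR s p * B * p
        = (s * SR s p - SR s p * p) * B := by
          have e : SR s p * B * p = SR s p * p * B := by rw [mul_assoc, ← hc, ← mul_assoc]
          rw [sub_mul, e, ← mul_assoc, mul_assoc]
      _ = B := by rw [this, one_mul]
end
end

section
/- Modified S-resolvent equation, first form (quaternionic case, with the operator T replaced by a quaternion p). Let p, B, s, q ∈ ℍ with p·B = B·p, Q_s(p) ≠ 0, Q_q(p) ≠ 0 and q ∉ [s] (so that Q_s(q) := q² − 2(Re s)·q + ‖s‖² ≠ 0). Then S_R⁻¹(s,p)·B·S_L⁻¹(q,p) = [ (S_R⁻¹(s,p)·B − B·S_L⁻¹(q,p))·q − s̄·(S_R⁻¹(s,p)·B − B·S_L⁻¹(q,p)) ]·Q_s(q)⁻¹. -/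
noncomputable section

open scoped Quaternion
open Finset

section Aux

open Quaternion

lemma commute_qker (s x y : ℍ[ℝ]) (h : Commute y x) : Commute y (Qker s x) := by
  unfold Qker
  exact ((h.pow_right 2).sub_right
    ((((Quaternion.coe_commute (2:ℝ) y).symm.mul_right
      (Quaternion.coe_commute s.re y).symm)).mul_right h)).add_right
    (Quaternion.coe_commute _ y).symm

lemma qker_two (s x : ℍ[ℝ]) :
    Qker s x = x ^ 2 - 2 * ((s.re : ℍ[ℝ])) * x + ((‖s‖ ^ 2 : ℝ) : ℍ[ℝ]) := by
  unfold Qker; push_cast; ring_nf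

lemma ring1 {H : Type*} [Ring H] (p q e : H) (he : e * p = p * e) :
    p * (p - (2 * e - q)) - (p - (2 * e - q)) * q = p ^ 2 - 2 * e * p + (2 * e - q) * q := by
  calc p * (p - (2 * e - q)) - (p - (2 * e - q)) * q
      = p ^ 2 - 2 * (e * p) + 2 * (e * q) - q ^ 2 := by
        rw [he]; noncomm_ring
    _ = p ^ 2 - 2 * e * p + (2 * e - q) * q := by noncomm_ring

lemma key2L (q p : ℍ[ℝ]) :
    p * (p - star q) - (p - star q) * q = Qker q p := by
  have hn : ((‖q‖ ^ 2 : ℝ) : ℍ[ℝ]) = star q * q := by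
    rw [Quaternion.star_mul_self, sq, ← Quaternion.normSq_eq_norm_mul_self]
  unfold Qker
  rw [hn, Quaternion.star_eq_two_re_sub]
  push_cast
  exact ring1 p q (q.re : ℍ[ℝ]) (Quaternion.coe_commutes q.re p)

lemma key2R (s p : ℍ[ℝ]) :
    (p - star s) * p - s * (p - star s) = Qker s p := by
  have hn : ((‖s‖ ^ 2 : ℝ) : ℍ[ℝ]) = s * star s := by
    rw [Quaternion.self_mul_star, sq, ← Quaternion.normSq_eq_norm_mul_self]
  unfold Qker
  rw [hn, Quaternion.star_eq_two_re_sub]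
  push_cast
  have he : (s.re : ℍ[ℝ]) * p = p * (s.re : ℍ[ℝ]) := Quaternion.coe_commutes s.re p
  calc (p - (2 * (s.re:ℍ[ℝ]) - s)) * p - s * (p - (2 * (s.re:ℍ[ℝ]) - s))
      = p ^ 2 - 2 * ((s.re:ℍ[ℝ]) * p) + 2 * (s * (s.re:ℍ[ℝ])) - s ^ 2 := by noncomm_ring
    _ = p ^ 2 - 2 * (s.re:ℍ[ℝ]) * p + s * (2 * (s.re:ℍ[ℝ]) - s) := by noncomm_ring

lemma resL (q p : ℍ[ℝ]) (h : Qker q p ≠ 0) : SL q p * q = p * SL q p + 1 := by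
  have hpb : Commute p (Qker q p) := commute_qker q p p (Commute.refl p)
  have hpbi : p * (Qker q p)⁻¹ = (Qker q p)⁻¹ * p := hpb.inv_right₀.eq
  have hXq : (p - star q) * q = p * (p - star q) - Qker q p := by
    rw [← key2L q p]; noncomm_ring
  unfold SL
  calc -((Qker q p)⁻¹ * (p - star q)) * q
      = -((Qker q p)⁻¹ * ((p - star q) * q)) := by noncomm_ring
    _ = -((Qker q p)⁻¹ * (p * (p - star q) - Qker q p)) := by rw [hXq]
    _ = -((Qker q p)⁻¹ * (p * (p - star q))) + (Qker q p)⁻¹ * Qker q p := by noncomm_ring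
    _ = -((Qker q p)⁻¹ * p * (p - star q)) + 1 := by rw [inv_mul_cancel₀ h, mul_assoc]
    _ = -(p * ((Qker q p)⁻¹ * (p - star q))) + 1 := by rw [← hpbi, mul_assoc]
    _ = p * -((Qker q p)⁻¹ * (p - star q)) + 1 := by noncomm_ring

lemma resR (s p : ℍ[ℝ]) (h : Qker s p ≠ 0) : s * SR s p = SR s p * p + 1 := by
  have hpa : Commute p (Qker s p) := commute_qker s p p (Commute.refl p)
  have hpai : (Qker s p)⁻¹ * p = p * (Qker s p)⁻¹ := hpa.inv_right₀.symm.eq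
  have hsY : s * (p - star s) = (p - star s) * p - Qker s p := by
    rw [← key2R s p]; noncomm_ring
  unfold SR
  calc s * -((p - star s) * (Qker s p)⁻¹)
      = -(s * (p - star s) * (Qker s p)⁻¹) := by noncomm_ring
    _ = -(((p - star s) * p - Qker s p) * (Qker s p)⁻¹) := by rw [hsY]
    _ = -((p - star s) * (p * (Qker s p)⁻¹)) + Qker s p * (Qker s p)⁻¹ := by noncomm_ring
    _ = -((p - star s) * ((Qker s p)⁻¹ * p)) + 1 := by rw [mul_inv_cancel₀ h, hpai]
    _ = -((p - star s) * (Qker s p)⁻¹) * p + 1 := by noncomm_ring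

lemma srq (s p : ℍ[ℝ]) (h : Qker s p ≠ 0) : SR s p * Qker s p = -(p - star s) := by
  unfold SR
  calc -((p - star s) * (Qker s p)⁻¹) * Qker s p
      = -((p - star s) * ((Qker s p)⁻¹ * Qker s p)) := by noncomm_ring
    _ = -(p - star s) := by rw [inv_mul_cancel₀ h, mul_one]

lemma slq (s q p : ℍ[ℝ]) (hq : Qker q p ≠ 0) :
    SL q p * Qker s q = Qker s p * SL q p + (p + q - 2 * (s.re : ℍ[ℝ])) := by
  have h1 := resL q p hq
  set L := SL q p with hL
  have hcomm1 : L * ((‖s‖ ^ 2 : ℝ) : ℍ[ℝ]) = ((‖s‖ ^ 2 : ℝ) : ℍ[ℝ]) * L :=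
    (Quaternion.coe_commutes _ _).symm
  have hcomm2 : L * ((s.re : ℝ) : ℍ[ℝ]) = ((s.re : ℝ) : ℍ[ℝ]) * L :=
    (Quaternion.coe_commutes _ _).symm
  calc L * Qker s q
      = (L * q) * q - 2 * ((L * (s.re : ℍ[ℝ])) * q) + L * ((‖s‖ ^ 2 : ℝ) : ℍ[ℝ]) := by
        unfold Qker; noncomm_ring
    _ = (L * q) * q - 2 * (((s.re : ℍ[ℝ]) * L) * q) + ((‖s‖ ^ 2 : ℝ) : ℍ[ℝ]) * L := by
        rw [hcomm2, hcomm1]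
    _ = (L * q) * q - 2 * ((s.re : ℍ[ℝ]) * (L * q)) + ((‖s‖ ^ 2 : ℝ) : ℍ[ℝ]) * L := by
        noncomm_ring
    _ = (p * L + 1) * q - 2 * ((s.re : ℍ[ℝ]) * (p * L + 1)) + ((‖s‖ ^ 2 : ℝ) : ℍ[ℝ]) * L := by
        rw [h1]
    _ = p * (L * q) + q - 2 * ((s.re : ℍ[ℝ]) * (p * L + 1)) + ((‖s‖ ^ 2 : ℝ) : ℍ[ℝ]) * L := by
        noncomm_ring
    _ = p * (p * L + 1) + q - 2 * ((s.re : ℍ[ℝ]) * (p * L + 1)) + ((‖s‖ ^ 2 : ℝ) : ℍ[ℝ]) * L := by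
        rw [h1]
    _ = (p ^ 2 - 2 * ((s.re : ℍ[ℝ]) * p) + ((‖s‖ ^ 2 : ℝ) : ℍ[ℝ])) * L
          + (p + q - 2 * (s.re : ℍ[ℝ])) := by noncomm_ring
    _ = Qker s p * L + (p + q - 2 * (s.re : ℍ[ℝ])) := by
        unfold Qker; noncomm_ring

lemma keyring {H : Type*} [Ring H] (L R A B p q s t c : H)
    (h1 : L * q = p * L + 1) (h2 : s * R = R * p + 1)
    (h3 : L * c = A * L + (p + q - t)) (h4 : R * A = -(p - (t - s)))
    (h5 : B * A = A * B) (h6 : p * B = B * p)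
    (htB : t * B = B * t) (htR : t * R = R * t) :
    R * B * L * c = (R * B - B * L) * q - (t - s) * (R * B - B * L) := by
  have lhs : R * B * L * c
      = R * B * q - (p * B) * L - R * (B * t) + t * (B * L) + R * (p * B) - s * (B * L) := by
    calc R * B * L * c = R * B * (L * c) := by rw [mul_assoc]
      _ = R * B * (A * L + (p + q - t)) := by rw [h3]
      _ = R * (B * A) * L + R * B * (p + q - t) := by noncomm_ring
      _ = R * (A * B) * L + R * B * (p + q - t) := by rw [h5]
      _ = (R * A) * (B * L) + (R * (B * p) + R * B * q - R * (B * t)) := by noncomm_ring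
      _ = (R * A) * (B * L) + (R * (p * B) + R * B * q - R * (B * t)) := by rw [← h6]
      _ = -(p - (t - s)) * (B * L) + (R * (p * B) + R * B * q - R * (B * t)) := by rw [h4]
      _ = R * B * q - (p * B) * L - R * (B * t) + t * (B * L) + R * (p * B) - s * (B * L) := by
          noncomm_ring
  have rhs : (R * B - B * L) * q - (t - s) * (R * B - B * L)
      = R * B * q - (p * B) * L - R * (B * t) + t * (B * L) + R * (p * B) - s * (B * L) := by
    calc (R * B - B * L) * q - (t - s) * (R * B - B * L)
        = R * B * q - B * (L * q) - (t * R) * B + t * (B * L) + (s * R) * B - s * (B * L) := by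
          noncomm_ring
      _ = R * B * q - B * (p * L + 1) - (R * t) * B + t * (B * L) + (R * p + 1) * B
            - s * (B * L) := by rw [h1, h2, htR]
      _ = R * B * q - (B * p) * L - R * (t * B) + t * (B * L) + R * (p * B) - s * (B * L) := by
          noncomm_ring
      _ = R * B * q - (p * B) * L - R * (B * t) + t * (B * L) + R * (p * B) - s * (B * L) := by
          rw [← h6, htB]
  rw [lhs, rhs]

lemma mem_assoc_of_qker {s q : ℍ[ℝ]} (h : Qker s q = 0) : q ∈ assocSphere s := by
  have h2c : ((2:ℝ):ℍ[ℝ]) = 2 := by norm_cast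
  have h' : q * q - (2 * s.re) • q + ((‖s‖ ^ 2 : ℝ) : ℍ[ℝ]) = 0 := by
    rw [← h]; unfold Qker
    rw [← Quaternion.coe_mul_eq_smul, Quaternion.coe_mul, h2c]; noncomm_ring
  have hnorm : ‖s‖ ^ 2 = s.re ^ 2 + s.imI ^ 2 + s.imJ ^ 2 + s.imK ^ 2 := by
    rw [sq, ← Quaternion.normSq_eq_norm_mul_self, Quaternion.normSq_def']
  have h0 := congrArg QuaternionAlgebra.re h'
  have h1 := congrArg QuaternionAlgebra.imI h'
  have h2 := congrArg QuaternionAlgebra.imJ h'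
  have h3 := congrArg QuaternionAlgebra.imK h'
  simp only [Quaternion.re_add, Quaternion.re_sub, Quaternion.re_mul, Quaternion.re_smul,
    Quaternion.imI_add, Quaternion.imI_sub, Quaternion.imI_mul, Quaternion.imI_smul,
    Quaternion.imJ_add, Quaternion.imJ_sub, Quaternion.imJ_mul, Quaternion.imJ_smul,
    Quaternion.imK_add, Quaternion.imK_sub, Quaternion.imK_mul, Quaternion.imK_smul,
    Quaternion.re_coe, Quaternion.imI_coe, Quaternion.imJ_coe, Quaternion.imK_coe,
    Quaternion.re_zero, Quaternion.imI_zero, Quaternion.imJ_zero, Quaternion.imK_zero,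
    smul_eq_mul, hnorm] at h0 h1 h2 h3
  have hre : q.re = s.re := by
    by_contra hne
    have hI : q.imI = 0 := by
      have h1' : q.imI * (q.re - s.re) = 0 := by linear_combination h1 / 2
      rcases mul_eq_zero.mp h1' with hh | hh
      · exact hh
      · exact absurd (sub_eq_zero.mp hh) hne
    have hJ : q.imJ = 0 := by
      have h2' : q.imJ * (q.re - s.re) = 0 := by linear_combination h2 / 2
      rcases mul_eq_zero.mp h2' with hh | hh
      · exact hh
      · exact absurd (sub_eq_zero.mp hh) hne
    have hK : q.imK = 0 := by
      have h3' : q.imK * (q.re - s.re) = 0 := by linear_combination h3 / 2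
      rcases mul_eq_zero.mp h3' with hh | hh
      · exact hh
      · exact absurd (sub_eq_zero.mp hh) hne
    have hpos : 0 < (q.re - s.re) ^ 2 := by
      have := sub_ne_zero.mpr hne
      positivity
    nlinarith [sq_nonneg s.imI, sq_nonneg s.imJ, sq_nonneg s.imK]
  have hnq : ‖q.im‖ = ‖s.im‖ := by
    have hsq : ‖q.im‖ ^ 2 = ‖s.im‖ ^ 2 := by
      rw [sq, ← Quaternion.normSq_eq_norm_mul_self, sq, ← Quaternion.normSq_eq_norm_mul_self,
        Quaternion.normSq_def', Quaternion.normSq_def']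
      simp only [Quaternion.re_im, Quaternion.imI_im, Quaternion.imJ_im, Quaternion.imK_im]
      nlinarith [hre]
    have hc := congrArg Real.sqrt hsq
    rwa [Real.sqrt_sq (norm_nonneg _), Real.sqrt_sq (norm_nonneg _)] at hc
  by_cases him : q.im = 0
  · have hs0 : ‖s.im‖ = 0 := by rw [← hnq, him, norm_zero]
    set j0 : ℍ[ℝ] := ⟨0,1,0,0⟩ with hj0def
    have hre0 : j0.re = 0 := rfl
    have hnsq : Quaternion.normSq j0 = 1 := by
      rw [Quaternion.normSq_def']
      show (0:ℝ)^2 + 1^2 + 0^2 + 0^2 = 1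
      norm_num
    have hn1 : ‖j0‖ = 1 := by
      have h4 : ‖j0‖ * ‖j0‖ = 1 := by rw [← Quaternion.normSq_eq_norm_mul_self, hnsq]
      nlinarith [norm_nonneg j0]
    refine ⟨j0, ⟨hre0, hn1⟩, ?_⟩
    rw [hs0, zero_smul, add_zero, ← hre]
    conv_lhs => rw [← Quaternion.re_add_im q]
    rw [him, add_zero]
  · have hq0 : ‖q.im‖ ≠ 0 := norm_ne_zero_iff.mpr him
    refine ⟨‖q.im‖⁻¹ • q.im, ⟨?_, ?_⟩, ?_⟩
    · simp
    · rw [norm_smul, norm_inv, norm_norm, inv_mul_cancel₀ hq0]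
    · rw [← hnq, smul_smul, mul_inv_cancel₀ hq0, one_smul, ← hre, Quaternion.re_add_im]
end Aux

/-- Modified `S`-resolvent equation, first form (quaternionic case). -/
theorem statement12 (p B s q : ℍ[ℝ]) (hc : p * B = B * p)
    (hs : Qker s p ≠ 0) (hq : Qker q p ≠ 0) (hqs : q ∉ assocSphere s) :
    SR s p * B * SL q p =
      ((SR s p * B - B * SL q p) * q - star s * (SR s p * B - B * SL q p)) *
        (Qker s q)⁻¹ := by
  have hc' : Qker s q ≠ 0 := fun h0 => hqs (mem_assoc_of_qker h0)
  rw [eq_mul_inv_iff_mul_eq₀ hc']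
  have h2c : ((2:ℝ):ℍ[ℝ]) = 2 := by norm_cast
  have hstar : star s = 2 * (s.re:ℍ[ℝ]) - s := by
    rw [Quaternion.star_eq_two_re_sub, Quaternion.coe_mul, h2c]
  rw [hstar]
  have h4' : SR s p * Qker s p = -(p - (2 * (s.re:ℍ[ℝ]) - s)) := by
    rw [srq s p hs, hstar]
  have h5' : B * Qker s p = Qker s p * B := (commute_qker s p B hc.symm).eq
  have htB : (2 * (s.re:ℍ[ℝ])) * B = B * (2 * (s.re:ℍ[ℝ])) := by
    rw [← h2c, ← Quaternion.coe_mul]; exact Quaternion.coe_commutes _ _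
  have htR : (2 * (s.re:ℍ[ℝ])) * SR s p = SR s p * (2 * (s.re:ℍ[ℝ])) := by
    rw [← h2c, ← Quaternion.coe_mul]; exact Quaternion.coe_commutes _ _
  exact keyring (SL q p) (SR s p) (Qker s p) B p q s (2 * (s.re:ℍ[ℝ])) (Qker s q)
    (resL q p hq) (resR s p hs) (slq s q p hq) h4' h5' hc htB htR
end
end

section
/- Pointwise product of an intrinsic poly slice monogenic function and a left poly slice monogenic function. Let U ⊆ ℍ be a nonempty axially symmetric open set and N, M ≥ 1. Let F : U → ℍ be intrinsic poly slice monogenic of order N with poly decomposition F(x) = ∑_{k=0}^{N−1} x̄^k·f_k(x), where each f_k is intrinsic slice monogenic on U, and let G : U → ℍ be left poly slice monogenic of order M with poly decomposition G(x) = ∑_{h=0}^{M−1} x̄^h·g_h(x), where each g_h is left slice monogenic on U. Then the pointwise product x ↦ F(x)·G(x) is left poly slice monogenic of order N+M−1 on U, and (F·G)(x) = ∑_{ℓ=0}^{N+M−2} x̄^ℓ·( ∑_{k+h=ℓ, 0≤k≤N−1, 0≤h≤M−1} f_k(x)·g_h(x) ) for all x ∈ U. -/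
noncomputable section

open scoped Quaternion
open Finset

open scoped ContDiff
open Function


def iq : ℍ[ℝ] := ⟨0,1,0,0⟩
def jq : ℍ[ℝ] := ⟨0,0,1,0⟩

lemma iq_mem : iq ∈ Sph := by
  refine ⟨rfl, ?_⟩
  rw [norm_eq_sqrt_real_inner, Quaternion.inner_self]
  rw [Quaternion.normSq_def']; simp [iq]

lemma neg_mem_Sph {j : ℍ[ℝ]} (hj : j ∈ Sph) : -j ∈ Sph := by
  refine ⟨by simp [hj.1], by simp [hj.2]⟩

lemma sph_star {j : ℍ[ℝ]} (hj : j ∈ Sph) : star j = -j :=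
  Quaternion.star_eq_neg.2 hj.1

lemma sph_mul_self {j : ℍ[ℝ]} (hj : j ∈ Sph) : j * j = -1 := by
  have h2 : Quaternion.normSq j = 1 := by
    rw [Quaternion.normSq_eq_norm_mul_self, hj.2, one_mul]
  have := Quaternion.self_mul_star (a := j)
  rw [sph_star hj, h2] at this
  have h3 : -(j * j) = 1 := by simpa [mul_neg] using this
  rw [← h3, neg_neg]

lemma iq_mul_iq : iq * iq = -1 := sph_mul_self iq_mem




lemma real_eq_coe {x : ℍ[ℝ]} (hx : x.im = 0) : x = (x.re : ℍ[ℝ]) := by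
  have h1 : x.imI = 0 := by rw [← Quaternion.imI_im, hx]; rfl
  have h2 : x.imJ = 0 := by rw [← Quaternion.imJ_im, hx]; rfl
  have h3 : x.imK = 0 := by rw [← Quaternion.imK_im, hx]; rfl
  ext <;> simp [h1, h2, h3]

open scoped Classical in
def jdir (x : ℍ[ℝ]) : ℍ[ℝ] := if x.im = 0 then iq else ‖x.im‖⁻¹ • x.im

lemma jdir_mem (x : ℍ[ℝ]) : jdir x ∈ Sph := by
  unfold jdir
  split_ifs with h
  · exact iq_mem
  · have hn : ‖x.im‖ ≠ 0 := by simpa using h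
    refine ⟨by simp, ?_⟩
    rw [norm_smul]
    simp [abs_of_nonneg (inv_nonneg.2 (norm_nonneg _)), inv_mul_cancel₀ hn]

lemma jdir_rep (x : ℍ[ℝ]) : x = (x.re : ℍ[ℝ]) + ‖x.im‖ • jdir x := by
  unfold jdir
  split_ifs with h
  · have : ‖x.im‖ = 0 := by simp [h]
    rw [this, zero_smul, add_zero]
    exact real_eq_coe h
  · have hn : ‖x.im‖ ≠ 0 := by simpa using h
    rw [smul_smul, mul_inv_cancel₀ hn, one_smul]
    conv_lhs => rw [← Quaternion.re_add_im x]

lemma mem_slicePlane_of_mem {U : Set ℍ[ℝ]} (hax : AxiallySymmetric U) {x : ℍ[ℝ]}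
    (hx : x ∈ U) : (x.re, ‖x.im‖) ∈ slicePlane U := by
  intro j hj
  exact hax x hx ⟨j, hj, rfl⟩

lemma isCompact_Sph : IsCompact Sph := by
  have hclosed : IsClosed Sph := by
    have h1 : IsClosed {j : ℍ[ℝ] | j.re = 0} :=
      isClosed_eq (Quaternion.continuous_re) continuous_const
    have h2 : IsClosed {j : ℍ[ℝ] | ‖j‖ = 1} := isClosed_eq (continuous_norm) continuous_const
    exact h1.inter h2
  have hbdd : Bornology.IsBounded Sph := by
    apply Bornology.IsBounded.subset (Metric.isBounded_closedBall (x := (0:ℍ[ℝ])) (r := 1))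
    intro j hj
    simp [Metric.mem_closedBall, dist_eq_norm, hj.2]
  exact Metric.isCompact_of_isClosed_isBounded hclosed hbdd

lemma isOpen_slicePlane {U : Set ℍ[ℝ]} (hop : IsOpen U) : IsOpen (slicePlane U) := by
  rw [isOpen_iff_mem_nhds]
  intro p₀ hp₀
  have hcont : Continuous (fun z : (ℝ × ℝ) × ℍ[ℝ] => ((z.1.1 : ℍ[ℝ]) + z.1.2 • z.2)) := by
    exact (Quaternion.continuous_coe.comp (continuous_fst.comp continuous_fst)).add
      ((continuous_snd.comp continuous_fst).smul continuous_snd)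
  have := isCompact_Sph.eventually_forall_of_forall_eventually
    (x₀ := p₀) (P := fun p j => ((p.1 : ℍ[ℝ]) + p.2 • j) ∈ U) ?_
  · exact this.mono fun p hp => hp
  · intro j hj
    have : ((p₀.1 : ℍ[ℝ]) + p₀.2 • j) ∈ U := hp₀ j hj
    exact hcont.continuousAt.preimage_mem_nhds (hop.mem_nhds this)


/-- left-multiplication CLM -/
def mulL (a : ℍ[ℝ]) : ℍ[ℝ] →L[ℝ] ℍ[ℝ] := ContinuousLinearMap.mul ℝ ℍ[ℝ] a
/-- right-multiplication CLM -/
def mulR (a : ℍ[ℝ]) : ℍ[ℝ] →L[ℝ] ℍ[ℝ] := (ContinuousLinearMap.mul ℝ ℍ[ℝ]).flip a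
@[simp] lemma mulL_apply (a x : ℍ[ℝ]) : mulL a x = a * x := rfl
@[simp] lemma mulR_apply (a x : ℍ[ℝ]) : mulR a x = x * a := rfl

variable {s : Set (ℝ × ℝ)} {j : ℍ[ℝ]} {f g : ℝ × ℝ → ℍ[ℝ]}

lemma dbar_congr_on (hs : IsOpen s) (h : ∀ p ∈ s, f p = g p) :
    ∀ p ∈ s, dbarL j f p = dbarL j g p := by
  intro p hp
  have hev : f =ᶠ[nhds p] g := Filter.eventuallyEq_of_mem (hs.mem_nhds hp) h
  unfold dbarL
  rw [hev.fderiv_eq]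

lemma dbar_iter_congr (hs : IsOpen s) (h : ∀ p ∈ s, f p = g p) (L : ℕ) :
    ∀ p ∈ s, (dbarL j)^[L] f p = (dbarL j)^[L] g p := by
  induction L with
  | zero => simpa using h
  | succ L ih =>
    intro p hp
    rw [Function.iterate_succ_apply', Function.iterate_succ_apply']
    exact dbar_congr_on hs ih p hp

lemma dbar_zero_fun : dbarL j (fun _ => (0:ℍ[ℝ])) = fun _ => 0 := by
  funext p
  simp [dbarL, fderiv_const]

lemma dbar_iter_zero_on (hs : IsOpen s) (h : ∀ p ∈ s, f p = 0) (L : ℕ) :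
    ∀ p ∈ s, (dbarL j)^[L] f p = 0 := by
  intro p hp
  have h0 : (dbarL j)^[L] (fun _ => (0:ℍ[ℝ])) = fun _ => 0 := by
    induction L with
    | zero => rfl
    | succ L ih => rw [Function.iterate_succ_apply, dbar_zero_fun, ih]
  have := dbar_iter_congr (j := j) (g := fun _ => (0:ℍ[ℝ])) hs h L p hp
  rw [this, h0]

lemma dbar_smooth (hs : IsOpen s) (hf : ContDiffOn ℝ ∞ f s) :
    ContDiffOn ℝ ∞ (dbarL j f) s := by
  have hD : ContDiffOn ℝ ∞ (fderiv ℝ f) s :=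
    hf.fderiv_of_isOpen hs (by exact_mod_cast le_refl _)
  have h1 : ContDiffOn ℝ ∞ (fun p => fderiv ℝ f p (1, 0)) s :=
    hD.clm_apply contDiffOn_const
  have h2 : ContDiffOn ℝ ∞ (fun p => fderiv ℝ f p (0, 1)) s :=
    hD.clm_apply contDiffOn_const
  have h3 : ContDiffOn ℝ ∞ (fun p => j * fderiv ℝ f p (0, 1)) s :=
    (mulL j).contDiff.comp_contDiffOn h2
  exact (h1.add h3).const_smul _

variable {j : ℍ[ℝ]} {f g : ℝ × ℝ → ℍ[ℝ]}

lemma diffAt_of_smooth (hs : IsOpen s) (hf : ContDiffOn ℝ ∞ f s) {p : ℝ × ℝ} (hp : p ∈ s) :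
    DifferentiableAt ℝ f p :=
  ((hf.differentiableOn (by simp)).differentiableAt (hs.mem_nhds hp))

lemma fderiv_commute (hs : IsOpen s) (hf : ContDiffOn ℝ ∞ f s)
    (hc : ∀ p ∈ s, j * f p = f p * j) :
    ∀ p ∈ s, ∀ v, j * fderiv ℝ f p v = fderiv ℝ f p v * j := by
  intro p hp v
  set L : ℍ[ℝ] →L[ℝ] ℍ[ℝ] := mulL j - mulR j with hL
  have hdf : HasFDerivAt f (fderiv ℝ f p) p := (diffAt_of_smooth hs hf hp).hasFDerivAt
  have hphi : HasFDerivAt (fun q => L (f q)) (L.comp (fderiv ℝ f p)) p :=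
    L.hasFDerivAt.comp p hdf
  have hzero : (fun q => L (f q)) =ᶠ[nhds p] (fun _ => 0) := by
    filter_upwards [hs.mem_nhds hp] with q hq
    simp [hL, sub_eq_zero, hc q hq]
  have h0 : fderiv ℝ (fun q => L (f q)) p = 0 := by
    rw [Filter.EventuallyEq.fderiv_eq hzero]
    exact fderiv_const_apply 0
  have := hphi.fderiv
  rw [h0] at this
  have h4 : L (fderiv ℝ f p v) = 0 := by
    rw [← ContinuousLinearMap.comp_apply, ← this]; rfl
  simpa [hL, sub_eq_zero] using h4

lemma dbar_comm (hs : IsOpen s) (hf : ContDiffOn ℝ ∞ f s)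
    (hc : ∀ p ∈ s, j * f p = f p * j) :
    ∀ p ∈ s, j * dbarL j f p = dbarL j f p * j := by
  intro p hp
  have h1 := fderiv_commute hs hf hc p hp (1, 0)
  have h2 := fderiv_commute hs hf hc p hp (0, 1)
  unfold dbarL
  rw [mul_smul_comm, smul_mul_assoc]
  congr 1
  rw [mul_add, add_mul, h1]
  congr 1
  rw [h2, ← mul_assoc, h2]

lemma dbar_add_on (hs : IsOpen s) (hf : ContDiffOn ℝ ∞ f s) (hg : ContDiffOn ℝ ∞ g s) :
    ∀ p ∈ s, dbarL j (fun q => f q + g q) p = dbarL j f p + dbarL j g p := by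
  intro p hp
  have hdf := (diffAt_of_smooth hs hf hp)
  have hdg := (diffAt_of_smooth hs hg hp)
  unfold dbarL
  rw [fderiv_fun_add hdf hdg]
  simp only [ContinuousLinearMap.add_apply, mul_add, smul_add]
  abel

lemma dbar_mul_on (hs : IsOpen s) (hf : ContDiffOn ℝ ∞ f s) (hg : ContDiffOn ℝ ∞ g s)
    (hc : ∀ p ∈ s, j * f p = f p * j) :
    ∀ p ∈ s, dbarL j (fun q => f q * g q) p = dbarL j f p * g p + f p * dbarL j g p := by
  intro p hp
  have hdf : HasFDerivAt f (fderiv ℝ f p) p := (diffAt_of_smooth hs hf hp).hasFDerivAt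
  have hdg : HasFDerivAt g (fderiv ℝ g p) p := (diffAt_of_smooth hs hg hp).hasFDerivAt
  have hmul := fderiv_fun_mul' hdf.differentiableAt hdg.differentiableAt
  unfold dbarL
  rw [hmul]
  have comm := hc p hp
  set a := fderiv ℝ f p (1, 0)
  set b := fderiv ℝ f p (0, 1)
  set c := fderiv ℝ g p (1, 0)
  set d := fderiv ℝ g p (0, 1)
  simp only [ContinuousLinearMap.add_apply, ContinuousLinearMap.smul_apply,
    ContinuousLinearMap.smulRight_apply, smul_eq_mul, smul_mul_assoc, mul_smul_comm,
    op_smul_eq_mul]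
  rw [← smul_add]
  congr 1
  have hkey : j * (f p * d) = f p * (j * d) := by rw [← mul_assoc, comm, mul_assoc]
  rw [mul_add j, hkey]
  noncomm_ring

lemma dbar_iter_add_on (hs : IsOpen s) (L : ℕ) :
    ∀ f g : ℝ × ℝ → ℍ[ℝ], ContDiffOn ℝ ∞ f s → ContDiffOn ℝ ∞ g s →
    ∀ p ∈ s, (dbarL j)^[L] (fun q => f q + g q) p = (dbarL j)^[L] f p + (dbarL j)^[L] g p := by
  induction L with
  | zero => intro f g _ _ p _; rfl
  | succ L ih =>
    intro f g hf hg p hp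
    rw [Function.iterate_succ_apply, Function.iterate_succ_apply, Function.iterate_succ_apply]
    have h1 : ∀ q ∈ s, dbarL j (fun q => f q + g q) q = (fun q => dbarL j f q + dbarL j g q) q :=
      dbar_add_on hs hf hg
    rw [dbar_iter_congr hs h1 L p hp]
    exact ih (dbarL j f) (dbarL j g) (dbar_smooth hs hf) (dbar_smooth hs hg) p hp

/-- Key PDE lemma: iterated dbar of a product. -/
lemma prod_pde (hs : IsOpen s) :
    ∀ K N M : ℕ, N + M ≤ K → 1 ≤ N → 1 ≤ M →
    ∀ f g : ℝ × ℝ → ℍ[ℝ], ContDiffOn ℝ ∞ f s → ContDiffOn ℝ ∞ g s →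
    (∀ p ∈ s, j * f p = f p * j) →
    (∀ p ∈ s, (dbarL j)^[N] f p = 0) → (∀ p ∈ s, (dbarL j)^[M] g p = 0) →
    ∀ p ∈ s, (dbarL j)^[N + M - 1] (fun q => f q * g q) p = 0 := by
  intro K
  induction K with
  | zero => intro N M h hN; omega
  | succ K ih =>
    intro N M hK hN hM f g hf hg hc hfz hgz p hp
    have hNM : N + M - 1 = (N + M - 2) + 1 := by omega
    rw [hNM, Function.iterate_succ_apply]
    have h1 : ∀ q ∈ s, dbarL j (fun q => f q * g q) q =
        (fun q => (dbarL j f q * g q) + (f q * dbarL j g q)) q :=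
      dbar_mul_on hs hf hg hc
    rw [dbar_iter_congr hs h1 _ p hp]
    have hdfs := dbar_smooth (j := j) hs hf
    have hdgs := dbar_smooth (j := j) hs hg
    rw [dbar_iter_add_on hs _ _ _ ((hdfs).mul hg) (hf.mul hdgs) p hp]
    have hterm1 : (dbarL j)^[N + M - 2] (fun q => dbarL j f q * g q) p = 0 := by
      rcases Nat.lt_or_ge N 2 with hN1 | hN2
      · -- N = 1 : dbarL j f vanishes on s
        have hN1' : N = 1 := by omega
        have hz : ∀ q ∈ s, dbarL j f q = 0 := by
          intro q hq; have := hfz q hq; rwa [hN1'] at this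
        have hz2 : ∀ q ∈ s, (fun q => dbarL j f q * g q) q = 0 := by
          intro q hq; simp [hz q hq]
        exact dbar_iter_zero_on hs hz2 _ p hp
      · -- N ≥ 2 : apply induction hypothesis with (N-1, M)
        have h2 : (N - 1) + M - 1 = N + M - 2 := by omega
        rw [← h2]
        refine ih (N - 1) M (by omega) (by omega) hM (dbarL j f) g hdfs hg
          (dbar_comm hs hf hc) ?_ hgz p hp
        intro q hq
        have : (dbarL j)^[N] f q = 0 := hfz q hq
        rwa [show N = (N - 1) + 1 by omega, Function.iterate_succ_apply] at this
    have hterm2 : (dbarL j)^[N + M - 2] (fun q => f q * dbarL j g q) p = 0 := by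
      rcases Nat.lt_or_ge M 2 with hM1 | hM2
      · have hM1' : M = 1 := by omega
        have hz : ∀ q ∈ s, dbarL j g q = 0 := by
          intro q hq; have := hgz q hq; rwa [hM1'] at this
        have hz2 : ∀ q ∈ s, (fun q => f q * dbarL j g q) q = 0 := by
          intro q hq; simp [hz q hq]
        exact dbar_iter_zero_on hs hz2 _ p hp
      · have h2 : N + (M - 1) - 1 = N + M - 2 := by omega
        rw [← h2]
        refine ih N (M - 1) (by omega) hN (by omega) f (dbarL j g) hf hdgs hc hfz ?_ p hp
        intro q hq
        have : (dbarL j)^[M] g q = 0 := hgz q hq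
        rwa [show M = (M - 1) + 1 by omega, Function.iterate_succ_apply] at this
    rw [hterm1, hterm2, add_zero]

/-- ℍ → ℂ × ℂ, x ↦ (x.re + x.imI i, x.imJ + x.imK i) -/
def pic : ℍ[ℝ] →ₗ[ℝ] ℂ × ℂ where
  toFun x := (⟨x.re, x.imI⟩, ⟨x.imJ, x.imK⟩)
  map_add' x y := by simp [Complex.ext_iff, Prod.ext_iff]
  map_smul' r x := by simp [Complex.ext_iff, Prod.ext_iff, Complex.real_smul]

def sig : ℂ × ℂ →ₗ[ℝ] ℍ[ℝ] where
  toFun zw := ⟨zw.1.re, zw.1.im, zw.2.re, zw.2.im⟩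
  map_add' x y := by ext <;> simp <;> rfl
  map_smul' r x := by ext <;> simp <;> rfl

lemma sig_pic (x : ℍ[ℝ]) : sig (pic x) = x := rfl

lemma pic_iq_mul (y : ℍ[ℝ]) : pic (iq * y) = Complex.I • pic y := by
  show ((⟨(iq*y).re, (iq*y).imI⟩, ⟨(iq*y).imJ, (iq*y).imK⟩) : ℂ × ℂ) = Complex.I • ((⟨y.re, y.imI⟩, ⟨y.imJ, y.imK⟩) : ℂ × ℂ)
  simp only [Quaternion.re_mul, Quaternion.imI_mul, Quaternion.imJ_mul, Quaternion.imK_mul]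
  simp [iq, Complex.ext_iff, Prod.ext_iff]

def picC : ℍ[ℝ] →L[ℝ] ℂ × ℂ := pic.toContinuousLinearMap
def sigC : ℂ × ℂ →L[ℝ] ℍ[ℝ] := sig.toContinuousLinearMap

lemma complex_basis_decomp (z : ℂ) : z = z.re • (1 : ℂ) + z.im • Complex.I := by
  apply Complex.ext <;> simp

lemma reg_iq (hs : IsOpen s) (hf : ContDiffOn ℝ 1 f s)
    (hd : ∀ p ∈ s, dbarL iq f p = 0) : ContDiffOn ℝ ∞ f s := by
  set ρ : ℂ →L[ℝ] ℝ × ℝ := (Complex.equivRealProdCLM : ℂ →L[ℝ] ℝ × ℝ)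
  set t : Set ℂ := (⇑Complex.equivRealProdCLM) ⁻¹' s with ht_def
  have ht : IsOpen t := hs.preimage Complex.equivRealProdCLM.continuous
  set g : ℂ → ℂ × ℂ := fun z => picC (f (z.re, z.im)) with hg_def
  have hdiff : DifferentiableOn ℂ g t := by
    intro z hz
    have hzs : ((z.re, z.im) : ℝ × ℝ) ∈ s := hz
    set p : ℝ × ℝ := (z.re, z.im)
    have hfd : HasFDerivAt f (fderiv ℝ f p) p :=
      ((hf.differentiableOn (by simp)).differentiableAt (hs.mem_nhds hzs)).hasFDerivAt
    set L := fderiv ℝ f p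
    have hρ : ρ z = p := rfl
    have hgd : HasFDerivAt g ((picC.comp L).comp ρ) z := by
      have h1 : HasFDerivAt (fun z : ℂ => f (ρ z)) (L.comp ρ) z :=
        hfd.comp z ρ.hasFDerivAt
      exact (picC.hasFDerivAt.comp z h1 : _)
    -- complex linearity
    set v : ℂ × ℂ := picC (L (1, 0)) with hv
    set L'' : ℂ →L[ℂ] ℂ × ℂ := (ContinuousLinearMap.id ℂ ℂ).smulRight v with hL''
    have hCR : L (1, 0) + iq * L (0, 1) = 0 := by
      have := hd p hzs
      unfold dbarL at this
      rwa [smul_eq_zero_iff_right (by norm_num : (2:ℝ)⁻¹ ≠ 0)] at this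
    have hkey : picC (L (0, 1)) = Complex.I • v := by
      have h1 : L (1, 0) = -(iq * L (0, 1)) := eq_neg_of_add_eq_zero_left hCR
      have hpc : ∀ y, picC (iq * y) = Complex.I • picC y := fun y => pic_iq_mul y
      have hw : v = -(Complex.I • picC (L (0, 1))) := by
        rw [hv, h1, map_neg, hpc]
      rw [hw, smul_neg, smul_smul, Complex.I_mul_I, neg_smul, one_smul, neg_neg]
    have hres : L''.restrictScalars ℝ = (picC.comp L).comp ρ := by
      apply ContinuousLinearMap.ext
      intro z
      have hz1 : (ρ (1 : ℂ)) = ((1:ℝ), (0:ℝ)) := rfl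
      have hzI : (ρ Complex.I) = ((0:ℝ), (1:ℝ)) := rfl
      calc L''.restrictScalars ℝ z = z • v := rfl
        _ = (z.re • (1:ℂ) + z.im • Complex.I) • v := by rw [← complex_basis_decomp]
        _ = z.re • ((1:ℂ) • v) + z.im • (Complex.I • v) := by
              rw [add_smul, smul_assoc, smul_assoc]
        _ = z.re • v + z.im • picC (L (0, 1)) := by rw [one_smul, hkey]
        _ = ((picC.comp L).comp ρ) (z.re • (1:ℂ) + z.im • Complex.I) := by
              rw [map_add, map_smul, map_smul]
              rfl
        _ = ((picC.comp L).comp ρ) z := by rw [← complex_basis_decomp]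
    have : HasFDerivAt g L'' z := hasFDerivAt_of_restrictScalars ℝ hgd hres
    exact this.differentiableAt.differentiableWithinAt
  have hgC : ContDiffOn ℂ ∞ g t := hdiff.contDiffOn ht
  have hgR : ContDiffOn ℝ ∞ g t := hgC.restrict_scalars ℝ
  have hfeq : f = fun p => sigC (g (Complex.equivRealProdCLM.symm p)) := by
    funext p
    have h1 : (Complex.equivRealProdCLM.symm p).re = p.1 := by simp
    have h2 : (Complex.equivRealProdCLM.symm p).im = p.2 := by simp
    simp only [hg_def, h1, h2]
    exact (sig_pic (f (p.1, p.2))).symm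
  rw [hfeq]
  apply sigC.contDiff.comp_contDiffOn
  apply hgR.comp (Complex.equivRealProdCLM.symm.contDiff.contDiffOn)
  intro p hp
  show Complex.equivRealProdCLM (Complex.equivRealProdCLM.symm p) ∈ s
  simpa using hp

lemma jq_ne_zero : (jq : ℍ[ℝ]) ≠ 0 := by
  intro h
  have : (jq : ℍ[ℝ]).imJ = 0 := by rw [h]; rfl
  simp [jq] at this

lemma sph_conj {j : ℍ[ℝ]} (hj : j ∈ Sph) :
    ∃ q : ℍ[ℝ], q ≠ 0 ∧ j * q = q * iq := by
  by_cases hcase : j = -iq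
  · refine ⟨jq, jq_ne_zero, ?_⟩
    subst hcase
    ext <;> simp only [Quaternion.re_mul, Quaternion.imI_mul, Quaternion.imJ_mul,
      Quaternion.imK_mul, Quaternion.re_neg, Quaternion.imI_neg, Quaternion.imJ_neg, Quaternion.imK_neg] <;> simp [iq, jq]
  · refine ⟨iq + j, ?_, ?_⟩
    · intro h
      exact hcase (eq_neg_of_add_eq_zero_right h)
    · rw [mul_add, add_mul, sph_mul_self hj, sph_mul_self iq_mem, add_comm]

lemma sph_conj_inv {j : ℍ[ℝ]} (hj : j ∈ Sph) :
    ∃ q : ℍ[ℝ], q ≠ 0 ∧ iq * q⁻¹ = q⁻¹ * j := by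
  obtain ⟨q, hq0, hq⟩ := sph_conj hj
  refine ⟨q, hq0, ?_⟩
  have h1 : iq = q⁻¹ * (j * q) := by
    rw [hq, ← mul_assoc, inv_mul_cancel₀ hq0, one_mul]
  rw [h1, mul_assoc, mul_assoc, mul_inv_cancel₀ hq0, mul_one]

/-- Regularity: slice-CR functions are smooth. -/
lemma reg {j : ℍ[ℝ]} (hs : IsOpen s) (hj : j ∈ Sph) (hf : ContDiffOn ℝ 1 f s)
    (hd : ∀ p ∈ s, dbarL j f p = 0) : ContDiffOn ℝ ∞ f s := by
  obtain ⟨q, hq0, hq⟩ := sph_conj_inv hj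
  set f' : ℝ × ℝ → ℍ[ℝ] := fun p => q⁻¹ * f p with hf'_def
  have hf'C : ContDiffOn ℝ 1 f' s := (mulL q⁻¹).contDiff.comp_contDiffOn hf
  have hd' : ∀ p ∈ s, dbarL iq f' p = 0 := by
    intro p hp
    have hdf : HasFDerivAt f (fderiv ℝ f p) p :=
      ((hf.differentiableOn (by simp)).differentiableAt (hs.mem_nhds hp)).hasFDerivAt
    have hDf' : fderiv ℝ f' p = (mulL q⁻¹).comp (fderiv ℝ f p) :=
      ((mulL q⁻¹).hasFDerivAt.comp p hdf).fderiv
    have h2 : dbarL iq f' p =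
        q⁻¹ * ((2:ℝ)⁻¹ • (fderiv ℝ f p (1,0) + j * fderiv ℝ f p (0,1))) := by
      unfold dbarL
      rw [hDf']
      rw [mul_smul_comm]
      congr 1
      have : iq * (q⁻¹ * fderiv ℝ f p (0,1)) = q⁻¹ * (j * fderiv ℝ f p (0,1)) := by
        rw [← mul_assoc, hq, mul_assoc]
      simp only [ContinuousLinearMap.coe_comp', Function.comp_apply, mulL_apply]
      rw [this, mul_add]
    have h3 := hd p hp
    unfold dbarL at h3
    rw [h2, h3, mul_zero]
  have hsm := reg_iq hs hf'C hd'
  have hfeq : f = fun p => q * f' p := by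
    funext p
    rw [hf'_def]
    simp only []
    rw [← mul_assoc, mul_inv_cancel₀ hq0, one_mul]
  rw [hfeq]
  exact (mulL q).contDiff.comp_contDiffOn hsm

lemma iq_ne_zero : (iq : ℍ[ℝ]) ≠ 0 := by
  intro h
  have : (iq : ℍ[ℝ]).imI = 0 := by rw [h]; rfl
  simp [iq] at this

lemma cancel_pair {A B A' B' : ℍ[ℝ]} (h1 : A + iq * B = A' + iq * B')
    (h2 : A + (-iq) * B = A' + (-iq) * B') : A = A' ∧ B = B' := by
  have hA : A = A' := by
    have hsum := congrArg₂ (· + ·) h1 h2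
    simp only [neg_mul] at hsum
    have : A + A = A' + A' := by
      have h := hsum
      abel_nf at h ⊢
      convert h using 2 <;> abel
    have h2' : (2:ℝ) • A = (2:ℝ) • A' := by
      rw [two_smul, two_smul]; exact this
    exact smul_right_injective ℍ[ℝ] (by norm_num : (2:ℝ) ≠ 0) h2'
  refine ⟨hA, ?_⟩
  rw [hA] at h1
  have h3 : iq * B = iq * B' := by
    exact add_left_cancel h1
  exact mul_left_cancel₀ iq_ne_zero h3

lemma cplane_mul {j : ℍ[ℝ]} (hj : j ∈ Sph) (a b : ℝ) (y z : ℍ[ℝ]) :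
    ((a : ℍ[ℝ]) + b • j) * (y + j * z) =
      (a • y - b • z) + j * (a • z + b • y) := by
  have hj2 := sph_mul_self hj
  rw [add_mul, mul_add, mul_add, smul_mul_assoc, smul_mul_assoc]
  rw [Quaternion.coe_mul_eq_smul, Quaternion.coe_mul_eq_smul]
  rw [← mul_assoc, hj2, neg_one_mul, smul_neg]
  rw [mul_add, mul_smul_comm, mul_smul_comm]
  abel

lemma cplane_mul' {j : ℍ[ℝ]} (hj : j ∈ Sph) (a b c d : ℝ) :
    ((a : ℍ[ℝ]) + b • j) * ((c : ℍ[ℝ]) + d • j) =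
      ((a * c - b * d : ℝ) : ℍ[ℝ]) + (a * d + b * c : ℝ) • j := by
  have hj2 := sph_mul_self hj
  rw [add_mul, mul_add, mul_add]
  rw [← Quaternion.coe_mul]
  rw [mul_smul_comm, Quaternion.coe_mul_eq_smul, smul_smul]
  rw [smul_mul_assoc, Quaternion.mul_coe_eq_smul, smul_smul]
  rw [smul_mul_assoc, mul_smul_comm, hj2]
  rw [show (-1 : ℍ[ℝ]) = ((-1:ℝ) : ℍ[ℝ]) by push_cast; ring]
  rw [Quaternion.smul_coe, Quaternion.smul_coe]
  have hco : ∀ r : ℝ, ((r:ℍ[ℝ])) = r • (1:ℍ[ℝ]) :=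
    fun r => by rw [← Quaternion.coe_mul_eq_smul, mul_one]
  rw [hco (a*c), hco (b*(d*-1)), hco (a*c - b*d)]
  module

lemma star_slice {j : ℍ[ℝ]} (hj : j ∈ Sph) (u v : ℝ) :
    star ((u : ℍ[ℝ]) + v • j) = (u : ℍ[ℝ]) + (-v) • j := by
  rw [star_add, Quaternion.star_coe, Quaternion.star_smul, sph_star hj, smul_neg, neg_smul]

lemma pow_slice {j : ℍ[ℝ]} (hj : j ∈ Sph) (z : ℂ) (k : ℕ) :
    ((z.re : ℍ[ℝ]) + z.im • j) ^ k = (((z ^ k).re : ℍ[ℝ])) + (z ^ k).im • j := by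
  induction k with
  | zero => simp
  | succ k ih =>
    rw [pow_succ, ih, cplane_mul' hj, pow_succ, Complex.mul_re, Complex.mul_im]

lemma cplane_comm {j : ℍ[ℝ]} (hj : j ∈ Sph) (a b c d : ℝ) :
    ((a : ℍ[ℝ]) + b • j) * ((c : ℍ[ℝ]) + d • j) =
      ((c : ℍ[ℝ]) + d • j) * ((a : ℍ[ℝ]) + b • j) := by
  rw [cplane_mul' hj, cplane_mul' hj]
  congr 1
  · exact congrArg _ (by ring)
  · rw [show a * d + b * c = c * b + d * a from by ring]





lemma zero_polySliceMonL (U : Set ℍ[ℝ]) : PolySliceMonL U 1 (fun _ => 0) := by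
  refine ⟨fun _ => 0, fun _ => 0, fun p _ j _ => by simp, ?_, ?_, ?_⟩
  · exact contDiffOn_const
  · exact contDiffOn_const
  · intro j _ p _
    simp only [mul_zero, add_zero]
    rw [Function.iterate_one]
    simp [dbarL, fderiv_const]

lemma polyCompL_one_smooth {U : Set ℍ[ℝ]} (hop : IsOpen U) {F₀ F₁ : ℝ × ℝ → ℍ[ℝ]}
    (h : PolyCompL U 1 F₀ F₁) :
    ContDiffOn ℝ ∞ F₀ (slicePlane U) ∧ ContDiffOn ℝ ∞ F₁ (slicePlane U) := by
  obtain ⟨h0, h1, hpde⟩ := h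
  set s := slicePlane U with hs_def
  have hso : IsOpen s := isOpen_slicePlane hop
  have h0' : ContDiffOn ℝ 1 F₀ s := by exact_mod_cast h0
  have h1' : ContDiffOn ℝ 1 F₁ s := by exact_mod_cast h1
  have hsm : ∀ j ∈ Sph, ContDiffOn ℝ ∞ (fun q => F₀ q + j * F₁ q) s := by
    intro j hj
    apply reg hso hj (h0'.add ((mulL j).contDiff.comp_contDiffOn h1'))
    intro p hp
    have := hpde j hj p hp
    rwa [Function.iterate_one] at this
  have hi := hsm iq iq_mem
  have hmi := hsm (-iq) (neg_mem_Sph iq_mem)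
  constructor
  · apply ContDiffOn.congr ((hi.add hmi).const_smul ((2:ℝ)⁻¹))
    intro p hp
    show F₀ p = (2:ℝ)⁻¹ • ((F₀ p + iq * F₁ p) + (F₀ p + (-iq) * F₁ p))
    rw [neg_mul]
    rw [show (F₀ p + iq * F₁ p) + (F₀ p + -(iq * F₁ p)) = F₀ p + F₀ p by abel]
    rw [← two_smul ℝ (F₀ p), smul_smul]
    norm_num
  · apply ContDiffOn.congr
      (((mulL (-iq)).contDiff.comp_contDiffOn (hi.sub hmi)).const_smul ((2:ℝ)⁻¹))
    intro p hp
    show F₁ p = (2:ℝ)⁻¹ • ((-iq) * ((F₀ p + iq * F₁ p) - (F₀ p + (-iq) * F₁ p)))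
    rw [show (F₀ p + iq * F₁ p) - (F₀ p + (-iq) * F₁ p) = iq * F₁ p + iq * F₁ p by
      rw [neg_mul]; abel]
    rw [← mul_add, neg_mul, ← mul_assoc, sph_mul_self iq_mem, neg_one_mul, neg_neg]
    rw [← two_smul ℝ (F₁ p), smul_smul]
    norm_num

lemma dec_smooth {U : Set ℍ[ℝ]} (hop : IsOpen U) {N : ℕ} {F : ℍ[ℝ] → ℍ[ℝ]}
    {F₀ F₁ : ℝ × ℝ → ℍ[ℝ]} {f : ℕ → ℍ[ℝ] → ℍ[ℝ]}
    (hcomp : SliceCompL U F F₀ F₁)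
    (hf : ∀ k, k < N → PolySliceMonL U 1 (f k))
    (hFdec : ∀ x ∈ U, F x = ∑ k ∈ Finset.range N, (star x) ^ k * f k x) :
    ContDiffOn ℝ ∞ F₀ (slicePlane U) ∧ ContDiffOn ℝ ∞ F₁ (slicePlane U) := by
  set s := slicePlane U with hs_def
  have hso : IsOpen s := isOpen_slicePlane hop
  have hf' : ∀ k, PolySliceMonL U 1 (fun x => if k < N then f k x else 0) := by
    intro k
    by_cases hk : k < N
    · simp only [if_pos hk]
      exact hf k hk
    · simp only [if_neg hk]
      exact zero_polySliceMonL U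
  choose φ₀ φ₁ hφc hφp using hf'
  have hφsm : ∀ k, ContDiffOn ℝ ∞ (φ₀ k) s ∧ ContDiffOn ℝ ∞ (φ₁ k) s := fun k =>
    polyCompL_one_smooth hop (hφp k)
  let c : ℕ → ℝ × ℝ → ℂ := fun k p => ((p.1 : ℂ) - p.2 • Complex.I) ^ k
  let Φ₀ : ℝ × ℝ → ℍ[ℝ] := fun p =>
    ∑ k ∈ Finset.range N, ((c k p).re • φ₀ k p - (c k p).im • φ₁ k p)
  let Φ₁ : ℝ × ℝ → ℍ[ℝ] := fun p =>
    ∑ k ∈ Finset.range N, ((c k p).re • φ₁ k p + (c k p).im • φ₀ k p)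
  have hkey : ∀ p ∈ s, ∀ j ∈ Sph, F₀ p + j * F₁ p = Φ₀ p + j * Φ₁ p := by
    intro p hp j hj
    have hx : ((p.1 : ℍ[ℝ]) + p.2 • j) ∈ U := hp j hj
    rw [← hcomp p hp j hj, hFdec _ hx]
    have hterm : ∀ k ∈ Finset.range N,
        (star ((p.1 : ℍ[ℝ]) + p.2 • j)) ^ k * f k ((p.1 : ℍ[ℝ]) + p.2 • j)
        = ((c k p).re • φ₀ k p - (c k p).im • φ₁ k p)
          + j * ((c k p).re • φ₁ k p + (c k p).im • φ₀ k p) := by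
      intro k hk
      have hkN : k < N := Finset.mem_range.1 hk
      have hfk : f k ((p.1 : ℍ[ℝ]) + p.2 • j) = φ₀ k p + j * φ₁ k p := by
        have := hφc k p hp j hj
        simpa [if_pos hkN] using this
      set z : ℂ := (p.1 : ℂ) - p.2 • Complex.I with hz_def
      have hzre : z.re = p.1 := by simp [hz_def]
      have hzim : z.im = -p.2 := by simp [hz_def]
      have hstar : star ((p.1 : ℍ[ℝ]) + p.2 • j) = ((z.re : ℝ) : ℍ[ℝ]) + z.im • j := by
        rw [star_slice hj, hzre, hzim]
      rw [hstar, pow_slice hj, hfk, cplane_mul hj]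
    rw [Finset.sum_congr rfl hterm, Finset.sum_add_distrib, ← Finset.mul_sum]
  have hpair : ∀ p ∈ s, F₀ p = Φ₀ p ∧ F₁ p = Φ₁ p := fun p hp =>
    cancel_pair (hkey p hp iq iq_mem) (hkey p hp (-iq) (neg_mem_Sph iq_mem))
  have hcsm : ∀ k, ContDiff ℝ ∞ (c k) := by
    intro k
    exact ((Complex.ofRealCLM.contDiff.comp contDiff_fst).sub
      (contDiff_snd.smul contDiff_const)).pow k
  have hcre : ∀ k, ContDiff ℝ ∞ (fun p => (c k p).re) := fun k =>
    Complex.reCLM.contDiff.comp (hcsm k)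
  have hcim : ∀ k, ContDiff ℝ ∞ (fun p => (c k p).im) := fun k =>
    Complex.imCLM.contDiff.comp (hcsm k)
  have hΦ₀ : ContDiffOn ℝ ∞ Φ₀ s := by
    apply ContDiffOn.sum
    intro k _
    exact (((hcre k).contDiffOn.smul (hφsm k).1)).sub (((hcim k).contDiffOn.smul (hφsm k).2))
  have hΦ₁ : ContDiffOn ℝ ∞ Φ₁ s := by
    apply ContDiffOn.sum
    intro k _
    exact (((hcre k).contDiffOn.smul (hφsm k).2)).add (((hcim k).contDiffOn.smul (hφsm k).1))
  exact ⟨hΦ₀.congr fun p hp => (hpair p hp).1, hΦ₁.congr fun p hp => (hpair p hp).2⟩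

lemma zero_polySliceMonN (U : Set ℍ[ℝ]) : PolySliceMonN U 1 (fun _ => 0) := by
  refine ⟨fun _ => 0, fun _ => 0, fun _ => by simp, fun _ => by simp,
    fun p _ j _ => by simp, contDiffOn_const, contDiffOn_const, ?_⟩
  intro j _ p _
  simp only [mul_zero, add_zero]
  rw [Function.iterate_one]
  simp [dbarL, fderiv_const]

lemma monL_of_monN {U : Set ℍ[ℝ]} {n : ℕ} {F : ℍ[ℝ] → ℍ[ℝ]} (h : PolySliceMonN U n F) :
    PolySliceMonL U n F := by
  obtain ⟨a, b, _, _, c, d⟩ := h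
  exact ⟨a, b, c, d⟩

lemma part2 {U : Set ℍ[ℝ]} (hax : AxiallySymmetric U) {N M : ℕ} (hN : 1 ≤ N) (hM : 1 ≤ M)
    {F G : ℍ[ℝ] → ℍ[ℝ]} {f g : ℕ → ℍ[ℝ] → ℍ[ℝ]}
    (hf : ∀ k < N, PolySliceMonN U 1 (f k))
    (hFdec : ∀ x ∈ U, F x = ∑ k ∈ Finset.range N, (star x) ^ k * f k x)
    (hGdec : ∀ x ∈ U, G x = ∑ h ∈ Finset.range M, (star x) ^ h * g h x) :
    ∀ x ∈ U, F x * G x =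
      ∑ l ∈ Finset.range (N + M - 1), (star x) ^ l *
        ∑ kh ∈ (Finset.range N ×ˢ Finset.range M).filter (fun kh => kh.1 + kh.2 = l),
          f kh.1 x * g kh.2 x := by
  intro x hx
  have hp : ((x.re, ‖x.im‖) : ℝ × ℝ) ∈ slicePlane U := mem_slicePlane_of_mem hax hx
  have hj : jdir x ∈ Sph := jdir_mem x
  have hxr : x = (x.re : ℍ[ℝ]) + ‖x.im‖ • jdir x := jdir_rep x
  -- commutation of f k x with powers of star x
  have hcomm : ∀ k, k < N → ∀ m : ℕ, f k x * (star x) ^ m = (star x) ^ m * f k x := by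
    intro k hk m
    obtain ⟨φ₀, φ₁, hre0, hre1, hφc, _⟩ := hf k hk
    have h1 : f k ((x.re : ℍ[ℝ]) + ‖x.im‖ • jdir x)
        = φ₀ (x.re, ‖x.im‖) + jdir x * φ₁ (x.re, ‖x.im‖) := hφc _ hp _ hj
    have hfx : f k x = ((φ₀ (x.re, ‖x.im‖)).re : ℍ[ℝ]) + (φ₁ (x.re, ‖x.im‖)).re • jdir x := by
      rw [← hxr] at h1
      conv_lhs => rw [h1, real_eq_coe (hre0 (x.re, ‖x.im‖)),
        real_eq_coe (hre1 (x.re, ‖x.im‖)), Quaternion.mul_coe_eq_smul]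
    set z : ℂ := ⟨x.re, -‖x.im‖⟩ with hz_def
    have hstar : star x = ((z.re : ℝ) : ℍ[ℝ]) + z.im • jdir x := by
      conv_lhs => rw [hxr]
      rw [star_slice hj]
    have hpow : (star x) ^ m = (((z ^ m).re : ℝ) : ℍ[ℝ]) + (z ^ m).im • jdir x := by
      rw [hstar, pow_slice hj]
    rw [hfx, hpow]
    exact cplane_comm hj _ _ _ _
  have hmain : F x * G x = ∑ kh ∈ Finset.range N ×ˢ Finset.range M,
      (star x) ^ (kh.1 + kh.2) * (f kh.1 x * g kh.2 x) := by
    rw [hFdec x hx, hGdec x hx, Finset.sum_mul_sum, Finset.sum_product]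
    refine Finset.sum_congr rfl fun k hk => Finset.sum_congr rfl fun h hh => ?_
    have hc := hcomm k (Finset.mem_range.1 hk) h
    calc (star x) ^ k * f k x * ((star x) ^ h * g h x)
        = (star x) ^ k * (f k x * ((star x) ^ h * g h x)) := by rw [mul_assoc]
      _ = (star x) ^ k * ((f k x * (star x) ^ h) * g h x) := by rw [← mul_assoc (f k x)]
      _ = (star x) ^ k * (((star x) ^ h * f k x) * g h x) := by rw [hc]
      _ = (star x) ^ k * ((star x) ^ h * (f k x * g h x)) := by rw [mul_assoc]
      _ = ((star x) ^ k * (star x) ^ h) * (f k x * g h x) := by rw [← mul_assoc]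
      _ = (star x) ^ (k + h) * (f k x * g h x) := by rw [pow_add]
  rw [hmain]
  rw [← Finset.sum_fiberwise_of_maps_to (g := fun kh : ℕ × ℕ => kh.1 + kh.2)
    (t := Finset.range (N + M - 1)) ?hmaps]
  case hmaps =>
    intro kh hkh
    simp only [Finset.mem_product, Finset.mem_range] at hkh
    refine Finset.mem_range.2 ?_
    show kh.1 + kh.2 < N + M - 1
    omega
  refine Finset.sum_congr rfl fun l hl => ?_
  rw [Finset.mul_sum]
  refine Finset.sum_congr rfl fun kh hkh => ?_
  have : kh.1 + kh.2 = l := (Finset.mem_filter.1 hkh).2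
  rw [this]

lemma real_mul_expand {j : ℍ[ℝ]} (hj : j ∈ Sph) (a b : ℝ) (y z : ℍ[ℝ]) :
    ((a : ℍ[ℝ]) + j * (b : ℍ[ℝ])) * (y + j * z) =
      ((a : ℍ[ℝ]) * y - (b : ℍ[ℝ]) * z) + j * ((a : ℍ[ℝ]) * z + (b : ℍ[ℝ]) * y) := by
  rw [Quaternion.mul_coe_eq_smul, cplane_mul hj, Quaternion.coe_mul_eq_smul,
    Quaternion.coe_mul_eq_smul, Quaternion.coe_mul_eq_smul, Quaternion.coe_mul_eq_smul]

lemma real_comm_j (j : ℍ[ℝ]) (a b : ℝ) :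
    j * ((a : ℍ[ℝ]) + j * (b : ℍ[ℝ])) = ((a : ℍ[ℝ]) + j * (b : ℍ[ℝ])) * j := by
  rw [mul_add, add_mul]
  congr 1
  · rw [← Quaternion.coe_commutes]
  · have h : j * ((b:ℝ) : ℍ[ℝ]) = ((b:ℝ) : ℍ[ℝ]) * j := (Quaternion.coe_commutes _ _).symm
    rw [h, ← mul_assoc, h]

theorem statement15' (U : Set ℍ[ℝ]) (hne : U.Nonempty) (hax : AxiallySymmetric U)
    (hop : IsOpen U) (N M : ℕ) (hN : 1 ≤ N) (hM : 1 ≤ M)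
    (F G : ℍ[ℝ] → ℍ[ℝ]) (f g : ℕ → ℍ[ℝ] → ℍ[ℝ])
    (hF : PolySliceMonN U N F)
    (hf : ∀ k < N, PolySliceMonN U 1 (f k))
    (hFdec : ∀ x ∈ U, F x = ∑ k ∈ Finset.range N, (star x) ^ k * f k x)
    (hG : PolySliceMonL U M G)
    (hg : ∀ h < M, PolySliceMonL U 1 (g h))
    (hGdec : ∀ x ∈ U, G x = ∑ h ∈ Finset.range M, (star x) ^ h * g h x) :
    PolySliceMonL U (N + M - 1) (fun x => F x * G x) ∧
    ∀ x ∈ U, F x * G x =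
      ∑ l ∈ Finset.range (N + M - 1), (star x) ^ l *
        ∑ kh ∈ (Finset.range N ×ˢ Finset.range M).filter (fun kh => kh.1 + kh.2 = l),
          f kh.1 x * g kh.2 x := by
  obtain ⟨F₀, F₁, hre0, hre1, hFc, hFp⟩ := hF
  obtain ⟨G₀, G₁, hGc, hGp⟩ := hG
  set s := slicePlane U with hs_def
  have hso : IsOpen s := isOpen_slicePlane hop
  -- smoothness of components from the order-one decompositions
  obtain ⟨hF₀sm, hF₁sm⟩ := dec_smooth hop hFc (fun k hk => monL_of_monN (hf k hk)) hFdec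
  obtain ⟨hG₀sm, hG₁sm⟩ := dec_smooth hop hGc hg hGdec
  constructor
  · refine ⟨fun q => F₀ q * G₀ q - F₁ q * G₁ q, fun q => F₀ q * G₁ q + F₁ q * G₀ q, ?_, ?_, ?_, ?_⟩
    · -- slice components of the product
      intro p hp j hj
      have hexp := real_mul_expand hj (F₀ p).re (F₁ p).re (G₀ p) (G₁ p)
      show F ((p.1 : ℍ[ℝ]) + p.2 • j) * G ((p.1 : ℍ[ℝ]) + p.2 • j)
        = (F₀ p * G₀ p - F₁ p * G₁ p) + j * (F₀ p * G₁ p + F₁ p * G₀ p)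
      rw [hFc p hp j hj, hGc p hp j hj]
      rw [real_eq_coe (hre0 p), real_eq_coe (hre1 p)]
      rw [hexp, ← real_eq_coe (hre0 p), ← real_eq_coe (hre1 p)]
    · exact ((hF₀sm.mul hG₀sm).sub (hF₁sm.mul hG₁sm)).of_le (by exact_mod_cast le_top)
    · exact ((hF₀sm.mul hG₁sm).add (hF₁sm.mul hG₀sm)).of_le (by exact_mod_cast le_top)
    · -- the PDE
      intro j hj p hp
      have hHeq : (fun q => (F₀ q * G₀ q - F₁ q * G₁ q) + j * (F₀ q * G₁ q + F₁ q * G₀ q))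
          = (fun q => (F₀ q + j * F₁ q) * (G₀ q + j * G₁ q)) := by
        funext q
        rw [real_eq_coe (hre0 q), real_eq_coe (hre1 q)]
        exact (real_mul_expand hj (F₀ q).re (F₁ q).re (G₀ q) (G₁ q)).symm
      rw [hHeq]
      have hAsm : ContDiffOn ℝ ∞ (fun q => F₀ q + j * F₁ q) s :=
        hF₀sm.add ((mulL j).contDiff.comp_contDiffOn hF₁sm)
      have hBsm : ContDiffOn ℝ ∞ (fun q => G₀ q + j * G₁ q) s :=
        hG₀sm.add ((mulL j).contDiff.comp_contDiffOn hG₁sm)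
      have hAcomm : ∀ q ∈ s, j * (F₀ q + j * F₁ q) = (F₀ q + j * F₁ q) * j := by
        intro q _
        rw [real_eq_coe (hre0 q), real_eq_coe (hre1 q)]
        exact real_comm_j j _ _
      exact prod_pde hso (N + M) N M le_rfl hN hM _ _ hAsm hBsm hAcomm
        (hFp.2.2 j hj) (hGp.2.2 j hj) p hp
  · exact part2 hax hN hM hf hFdec hGdec

/-- Pointwise product of an intrinsic poly slice monogenic function of order `N`
and a left poly slice monogenic function of order `M`. -/
theorem statement15 (U : Set ℍ[ℝ]) (hne : U.Nonempty) (hax : AxiallySymmetric U)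
    (hop : IsOpen U) (N M : ℕ) (hN : 1 ≤ N) (hM : 1 ≤ M)
    (F G : ℍ[ℝ] → ℍ[ℝ]) (f g : ℕ → ℍ[ℝ] → ℍ[ℝ])
    (hF : PolySliceMonN U N F)
    (hf : ∀ k < N, PolySliceMonN U 1 (f k))
    (hFdec : ∀ x ∈ U, F x = ∑ k ∈ Finset.range N, (star x) ^ k * f k x)
    (hG : PolySliceMonL U M G)
    (hg : ∀ h < M, PolySliceMonL U 1 (g h))
    (hGdec : ∀ x ∈ U, G x = ∑ h ∈ Finset.range M, (star x) ^ h * g h x) :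
    PolySliceMonL U (N + M - 1) (fun x => F x * G x) ∧
    ∀ x ∈ U, F x * G x =
      ∑ l ∈ Finset.range (N + M - 1), (star x) ^ l *
        ∑ kh ∈ (Finset.range N ×ˢ Finset.range M).filter (fun kh => kh.1 + kh.2 = l),
          f kh.1 x * g kh.2 x := by
  exact statement15' U hne hax hop N M hN hM F G f g hF hf hFdec hG hg hGdec
end
end

section
/- Complex-kernel representation of the slice monogenic Cauchy kernel. Let x ∈ ℍ and write x = u + v·j_x with u = Re x, v ∈ ℝ, j_x ∈ 𝕊 (if Im x = 0, any j_x ∈ 𝕊 and v = 0 work). Let j ∈ 𝕊 and set z := u + v·j. Then for every s ∈ ℂ_j with s ∉ [x] (equivalently s ≠ z and s ≠ z̄): S_L⁻¹(s,x) = (1/2)·(1 − j_x·j)·(s − z)⁻¹ + (1/2)·(1 + j_x·j)·(s − z̄)⁻¹. -/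
noncomputable section

open scoped Quaternion
open Finset

open Quaternion

theorem coe_eq_smul_one (r : ℝ) : (r : ℍ[ℝ]) = r • (1 : ℍ[ℝ]) := by
  rw [← Quaternion.coe_mul_eq_smul, mul_one]

theorem sph_mul_self_s16 (j : ℍ[ℝ]) (h0 : j.re = 0) (h1 : ‖j‖ = 1) : j * j = -1 := by
  have hst : star j = -j := Quaternion.star_eq_neg.mpr h0
  have h3 := j.star_mul_self
  rw [hst, neg_mul] at h3
  have h2 : (normSq j : ℝ) = 1 := by
    rw [normSq_eq_norm_mul_self, h1]; ring
  rw [h2] at h3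
  rw [← neg_neg (j * j), h3]
  norm_num

theorem mulCC (j : ℍ[ℝ]) (hjj : j * j = -1) (c d e f : ℝ) :
    ((c : ℍ[ℝ]) + d • j) * ((e : ℍ[ℝ]) + f • j)
      = ((c*e - d*f : ℝ) : ℍ[ℝ]) + (c*f + d*e) • j := by
  simp only [add_mul, mul_add, smul_mul_smul_comm, hjj, mul_smul_comm, smul_mul_assoc,
    Quaternion.coe_mul, Quaternion.coe_mul_eq_smul, Quaternion.mul_coe_eq_smul,
    coe_eq_smul_one, one_mul, mul_one, smul_neg]
  module

theorem subCC (j : ℍ[ℝ]) (c d e f : ℝ) :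
    ((c : ℍ[ℝ]) + d • j) - ((e : ℍ[ℝ]) + f • j) = ((c - e : ℝ) : ℍ[ℝ]) + (d - f) • j := by
  simp only [coe_eq_smul_one]; module

theorem starCC (j : ℍ[ℝ]) (h0 : j.re = 0) (c d : ℝ) :
    star ((c : ℍ[ℝ]) + d • j) = (c : ℍ[ℝ]) + (-d) • j := by
  have hst : star j = -j := Quaternion.star_eq_neg.mpr h0
  rw [star_add, Quaternion.star_smul, hst, Quaternion.star_coe, smul_neg, neg_smul]

/-- Complex-kernel representation of the slice monogenic Cauchy kernel. -/
theorem statement16 (x : ℍ[ℝ]) (u v : ℝ) (jx : ℍ[ℝ]) (hjx : jx ∈ Sph)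
    (hx : x = (u : ℍ[ℝ]) + v • jx) (j : ℍ[ℝ]) (hj : j ∈ Sph)
    (s : ℍ[ℝ]) (hs : s ∈ Cplane j) (hsx : s ∉ assocSphere x) :
    SL s x =
      (2 : ℝ)⁻¹ • ((1 - jx * j) * (s - ((u : ℍ[ℝ]) + v • j))⁻¹) +
      (2 : ℝ)⁻¹ • ((1 + jx * j) * (s - star ((u : ℍ[ℝ]) + v • j))⁻¹) := by
  obtain ⟨h0x, h1x⟩ := hjx
  obtain ⟨h0j, h1j⟩ := hj
  obtain ⟨a, b, hsab⟩ := hs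
  have hjj : j * j = -1 := sph_mul_self_s16 j h0j h1j
  have hxx : jx * jx = -1 := sph_mul_self_s16 jx h0x h1x
  set z : ℍ[ℝ] := (u : ℍ[ℝ]) + v • j with hz
  set L : ℍ[ℝ] := 1 - jx * j with hLdef
  set R : ℍ[ℝ] := 1 + jx * j with hRdef
  have hstarz : star z = (u : ℍ[ℝ]) + (-v) • j := starCC j h0j u v
  have hstars : star s = (a : ℍ[ℝ]) + (-b) • j := by rw [hsab]; exact starCC j h0j a b
  have hxre : x.re = u := by rw [hx]; simp [h0x]
  have hxim : x.im = v • jx := by rw [hx]; ext <;> simp [h0x]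
  have hnim : ‖x.im‖ = |v| := by
    rw [hxim, norm_smul, h1x, mul_one, Real.norm_eq_abs]
  have hnegSph : (-j) ∈ Sph := by
    constructor
    · show (-j).re = 0; simp [h0j]
    · show ‖-j‖ = 1; simp [h1j]
  have hjSph : j ∈ Sph := ⟨h0j, h1j⟩
  have hz1 : s ≠ z := by
    intro h
    apply hsx
    rcases le_or_gt 0 v with hv | hv
    · refine ⟨j, hjSph, ?_⟩
      rw [h, hxre, hnim, abs_of_nonneg hv]
    · refine ⟨-j, hnegSph, ?_⟩
      rw [h, hxre, hnim, abs_of_neg hv, hz]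
      module
  have hz2 : s ≠ star z := by
    intro h
    apply hsx
    rcases le_or_gt 0 v with hv | hv
    · refine ⟨-j, hnegSph, ?_⟩
      rw [h, hxre, hnim, abs_of_nonneg hv, hstarz]
      module
    · refine ⟨j, hjSph, ?_⟩
      rw [h, hxre, hnim, abs_of_neg hv, hstarz]
  have jxL : jx * L = L * j := by
    rw [hLdef, mul_sub, sub_mul, one_mul, mul_one, ← mul_assoc, hxx, mul_assoc, hjj]
    simp only [neg_one_mul, mul_neg_one, sub_neg_eq_add]
    exact add_comm _ _
  have jxR : jx * R = R * (-j) := by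
    rw [hRdef, mul_add, add_mul, one_mul, mul_one, ← mul_assoc, hxx, mul_assoc, mul_neg,
      hjj, neg_neg, mul_one, neg_one_mul]
    exact add_comm _ _
  have hL : x * L = L * z := by
    have h7 : x * L = L * (u : ℍ[ℝ]) + v • (L * j) := by
      rw [hx, add_mul, smul_mul_assoc, jxL, Quaternion.coe_commutes]
    rw [h7, hz, mul_add, mul_smul_comm, Quaternion.mul_coe_eq_smul,
      ← Quaternion.coe_mul_eq_smul, Quaternion.coe_commutes]
  have hR : x * R = R * star z := by
    have h7 : x * R = R * (u : ℍ[ℝ]) + v • (R * (-j)) := by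
      rw [hx, add_mul, smul_mul_assoc, jxR, Quaternion.coe_commutes]
    rw [h7, hstarz, mul_add, mul_smul_comm, Quaternion.mul_coe_eq_smul,
      ← Quaternion.coe_mul_eq_smul, Quaternion.coe_commutes, mul_neg, smul_neg, neg_smul]
  have hsre : s.re = a := by rw [hsab]; simp [h0j]
  have hns : ((‖s‖ ^ 2 : ℝ) : ℍ[ℝ]) = ((a^2 + b^2 : ℝ) : ℍ[ℝ]) := by
    have h4 : s * star s = ((normSq s : ℝ) : ℍ[ℝ]) := s.self_mul_star
    have h5 : (normSq s : ℝ) = ‖s‖ ^ 2 := by rw [normSq_eq_norm_mul_self, sq]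
    have h6 : s * star s = ((a^2 + b^2 : ℝ) : ℍ[ℝ]) := by
      rw [hsab] at hstars
      rw [hsab, hstars, mulCC j hjj]
      simp only [coe_eq_smul_one]
      module
    rw [← h5, ← h4, h6]
  -- Q * L and Q * R identities
  have hxxL : (x * x) * L = L * (z * z) := by
    rw [mul_assoc, hL, ← mul_assoc, hL, mul_assoc]
  have hxxR : (x * x) * R = R * (star z * star z) := by
    rw [mul_assoc, hR, ← mul_assoc, hR, mul_assoc]
  have h2q : ((2 : ℝ) : ℍ[ℝ]) = (2 : ℍ[ℝ]) := by norm_cast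
  have h2nz : (2 : ℍ[ℝ]) ≠ 0 := by
    rw [← h2q, ← Quaternion.coe_zero]
    exact fun h => (two_ne_zero : (2 : ℝ) ≠ 0) (Quaternion.coe_injective h)
  have hcoe2a : 2 * ((a : ℝ) : ℍ[ℝ]) = ((2*a : ℝ) : ℍ[ℝ]) := by rw [Quaternion.coe_mul, h2q]
  have e1L : Qker s x * L = (x*x)*L - (2*a : ℝ) • (x*L) + (a^2+b^2 : ℝ) • L := by
    rw [Qker, hsre, hns, sq, add_mul, sub_mul, hcoe2a]
    simp only [Quaternion.coe_mul_eq_smul, smul_mul_assoc]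
  have e1R : Qker s x * R = (x*x)*R - (2*a : ℝ) • (x*R) + (a^2+b^2 : ℝ) • R := by
    rw [Qker, hsre, hns, sq, add_mul, sub_mul, hcoe2a]
    simp only [Quaternion.coe_mul_eq_smul, smul_mul_assoc]
  have hQL : Qker s x * L = L * ((star s - z) * (s - z)) := by
    have e3 : (z*z) - (2*a : ℝ) • z + ((a^2+b^2 : ℝ) : ℍ[ℝ]) = (star s - z) * (s - z) := by
      rw [hstars, hsab, hz, subCC, subCC, mulCC j hjj, mulCC j hjj]
      simp only [coe_eq_smul_one, smul_add, smul_smul]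
      module
    rw [e1L, hxxL, hL, ← e3,
      mul_add L (z*z - (2*a : ℝ) • z) (((a^2+b^2 : ℝ) : ℍ[ℝ])),
      mul_sub L (z*z) ((2*a : ℝ) • z), mul_smul_comm, Quaternion.mul_coe_eq_smul]
  have hQR : Qker s x * R = R * ((star s - star z) * (s - star z)) := by
    have e3 : (star z * star z) - (2*a : ℝ) • (star z) + ((a^2+b^2 : ℝ) : ℍ[ℝ])
        = (star s - star z) * (s - star z) := by
      rw [hstars, hsab, hstarz, subCC, subCC, mulCC j hjj, mulCC j hjj]
      simp only [coe_eq_smul_one, smul_add, smul_smul]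
      module
    rw [e1R, hxxR, hR, ← e3,
      mul_add R (star z * star z - (2*a : ℝ) • star z) (((a^2+b^2 : ℝ) : ℍ[ℝ])),
      mul_sub R (star z * star z) ((2*a : ℝ) • star z), mul_smul_comm,
      Quaternion.mul_coe_eq_smul]
  have hz1' : s - z ≠ 0 := sub_ne_zero.mpr hz1
  have hz2' : s - star z ≠ 0 := sub_ne_zero.mpr hz2
  have hsz1 : star s - z ≠ 0 := by
    intro hc
    apply hz2
    rw [← star_star s, sub_eq_zero.mp hc]
  have hsz2 : star s - star z ≠ 0 := by
    intro hc
    exact hz1 (star_injective (sub_eq_zero.mp hc))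
  have hLR2 : L + R = 2 := by
    rw [hLdef, hRdef, sub_add_add_cancel, one_add_one_eq_two]
  have hQ : Qker s x ≠ 0 := by
    intro h
    have e1 : L * ((star s - z) * (s - z)) = 0 := by rw [← hQL, h, zero_mul]
    have e2 : R * ((star s - star z) * (s - star z)) = 0 := by rw [← hQR, h, zero_mul]
    rcases mul_eq_zero.mp e1 with hL0 | hW
    · have hR2 : R = 2 := by rw [← hLR2, hL0, zero_add]
      rw [hR2] at e2
      have e2' := (mul_eq_zero.mp e2).resolve_left h2nz
      rcases mul_eq_zero.mp e2' with h1 | h2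
      · exact hsz2 h1
      · exact hz2' h2
    · rcases mul_eq_zero.mp hW with h1 | h2
      · exact hsz1 h1
      · exact hz1' h2
  -- the key identity
  have kL : Qker s x * (L * (s - z)⁻¹) = L * (star s - z) := by
    rw [← mul_assoc, hQL, mul_assoc, mul_assoc, mul_inv_cancel₀ hz1', mul_one]
  have kR : Qker s x * (R * (s - star z)⁻¹) = R * (star s - star z) := by
    rw [← mul_assoc, hQR, mul_assoc, mul_assoc, mul_inv_cancel₀ hz2', mul_one]
  have key : Qker s x * ((2 : ℝ)⁻¹ • (L * (s - z)⁻¹) + (2 : ℝ)⁻¹ • (R * (s - star z)⁻¹))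
      = star s - x := by
    rw [mul_add, mul_smul_comm, mul_smul_comm, kL, kR]
    have c1 : L * (star s - z) = L * star s - x * L := by rw [mul_sub, hL]
    have c2 : R * (star s - star z) = R * star s - x * R := by rw [mul_sub, hR]
    have c3 : (L * star s - x * L) + (R * star s - x * R) = 2 * star s - x * 2 := by
      rw [← hLR2]; noncomm_ring; try norm_num
    rw [c1, c2, ← smul_add, c3]
    have h2 : (2 : ℍ[ℝ]) = ((2 : ℝ) : ℍ[ℝ]) := by norm_cast
    rw [h2, Quaternion.coe_mul_eq_smul, Quaternion.mul_coe_eq_smul, ← smul_sub, smul_smul]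
    norm_num
  have hform : SL s x = (Qker s x)⁻¹ * (star s - x) := by
    rw [SL, ← mul_neg, neg_sub]
  rw [hform, ← key, inv_mul_cancel_left₀ hQ]
end
end
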